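/- arXiv:1209.3084 — 7 statements merged into one kernel-verified Lean document; each statement's English description precedes it below -/
import Mathlib

section
/- (Lemma 2.1) For every m ≥ 0 and every x ∈ V, one has x ∈ ∂_m if and only if u(x) = m. Consequently the sets ∂_0, ∂_1, ∂_2, … are pairwise disjoint and their union is V, i.e. {∂_n : n ≥ 0} is a partition of V. -/
open scoped ENNReal BigOperators

namespace WedgePaper

/-- A point of `ℤ^{d+1}`, written as (x₁,…,x_d, x_{d+1}). -/
abbrev Pt (d : ℕ) := (Fin d → ℤ) × ℤ

/-- The vertex set `V` of `Wedge(f₁,…,f_d)`: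
points `(x₁,…,x_d,n) ∈ ℤ^{d+1}` with `n ≥ 0` and `0 ≤ xᵢ ≤ fᵢ(n)`. -/
def V (d : ℕ) (f : Fin d → ℕ → ℝ≥0∞) : Set (Pt d) :=
  {x | 0 ≤ x.2 ∧ ∀ i, 0 ≤ x.1 i ∧ ((x.1 i).toNat : ℝ≥0∞) ≤ f i x.2.toNat}

/-- The ℓ¹ distance on `ℤ^{d+1}`. -/
def dist1 (d : ℕ) (x y : Pt d) : ℤ :=
  (∑ i : Fin d, |x.1 i - y.1 i|) + |x.2 - y.2|

/-- The edge relation of `Wedge(f₁,…,f_d)`. -/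
def Edge (d : ℕ) (f : Fin d → ℕ → ℝ≥0∞) (x y : Pt d) : Prop :=
  x ∈ V d f ∧ y ∈ V d f ∧ dist1 d x y = 1

/-- `pfun d h x i = pᵢ(x) = min{m : hᵢ(m) ≥ xᵢ}`. -/
noncomputable def pfun (d : ℕ) (h : Fin d → ℕ → ℕ) (x : Pt d) (i : Fin d) : ℕ :=
  sInf {m : ℕ | x.1 i ≤ (h i m : ℤ)}

/-- `ufun d h x = u(x) = max{x_{d+1}, p₁(x),…,p_d(x)}`. -/
noncomputable def ufun (d : ℕ) (h : Fin d → ℕ → ℕ) (x : Pt d) : ℕ :=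
  max x.2.toNat (Finset.univ.sup (pfun d h x))

/-- `Δ_{d+1}(n)`. -/
def DeltaTop (d : ℕ) (h : Fin d → ℕ → ℕ) : ℕ → Set (Pt d)
  | 0 => {0}
  | (n+1) => {x | x.2 = ((n : ℤ) + 1) ∧ ∀ i, 0 ≤ x.1 i ∧ x.1 i ≤ (h i (n+1) : ℤ)}

/-- `Δᵢ(n)` for `1 ≤ i ≤ d` (empty when `hᵢ(n) = hᵢ(n-1)`). -/
def DeltaSide (d : ℕ) (f : Fin d → ℕ → ℝ≥0∞) (h : Fin d → ℕ → ℕ) (i : Fin d) :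
    ℕ → Set (Pt d)
  | 0 => {0}
  | (n+1) => {x | h i (n+1) = h i n + 1 ∧ x ∈ V d f ∧
      (∀ j, x.1 j ≤ (h j (n+1) : ℤ)) ∧ x.1 i = (h i (n+1) : ℤ) ∧ x.2 ≤ (n : ℤ) + 1}

/-- `∂_n = ⋃_{i=1}^{d+1} Δᵢ(n)`. -/
def bdry (d : ℕ) (f : Fin d → ℕ → ℝ≥0∞) (h : Fin d → ℕ → ℕ) (n : ℕ) : Set (Pt d) :=
  DeltaTop d h n ∪ ⋃ i, DeltaSide d f h i n

/-- `x + eᵢ`, where `eᵢ` is the i-th standard unit vector of `ℤ^{d+1}`. -/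
def addE (d : ℕ) (x : Pt d) (i : Fin (d+1)) : Pt d :=
  if hi : (i : ℕ) < d then (Function.update x.1 ⟨i, hi⟩ (x.1 ⟨i, hi⟩ + 1), x.2)
  else (x.1, x.2 + 1)

/-- A flow on `Wedge(f₁,…,f_d)`: an antisymmetric function vanishing off edges. -/
def IsFlow (d : ℕ) (f : Fin d → ℕ → ℝ≥0∞) (θ : Pt d → Pt d → ℝ) : Prop :=
  (∀ v w, θ v w = - θ w v) ∧ ∀ v w, ¬ Edge d f v w → θ v w = 0

/-- Divergence of `θ` at `v`: `∑_w θ(v,w)`. -/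
noncomputable def divg (d : ℕ) (θ : Pt d → Pt d → ℝ) (v : Pt d) : ℝ := ∑' w, θ v w

/-- Energy of a flow: `(1/2) ∑_{v,w} θ(v,w)²`. -/
noncomputable def energy (d : ℕ) (θ : Pt d → Pt d → ℝ) : ℝ≥0∞ :=
  (1/2 : ℝ≥0∞) * ∑' q : Pt d × Pt d, ENNReal.ofReal (θ q.1 q.2 ^ 2)

/-- A unit flow from the vertex `a` to the set `B`. -/
def IsUnitFlow (d : ℕ) (f : Fin d → ℕ → ℝ≥0∞) (a : Pt d) (B : Set (Pt d))
    (θ : Pt d → Pt d → ℝ) : Prop :=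
  IsFlow d f θ ∧ divg d θ a = 1 ∧ ∀ v, v ∉ B ∪ {a} → divg d θ v = 0

/-- The set `V_x` built from the functions `g_{±i}` (here `gp i = g_i`, `gm i = g_{-i}`). -/
def Vx (d : ℕ) (gp gm : Fin d → ℕ → ℤ) (r s : ℕ) : Set (Pt d) :=
  {y | ∃ n : ℕ, n ≤ r - s ∧ y.2 = (n : ℤ) + (s : ℤ) ∧
    ∀ i, gm i n ≤ y.1 i ∧ y.1 i ≤ gp i n}

/-- `Lᵢ(n) = min{g_{εi}(n) : g_{εi}(n) = g_{εi}(n-1), ε ∈ {-1,1}}` (for `n ≥ 1`). -/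
def Lfun (d : ℕ) (gp gm : Fin d → ℕ → ℤ) (i : Fin d) (n : ℕ) : ℤ :=
  if gm i n = gm i (n-1) then gm i n else gp i n

/-- The map `Γ`. -/
def Gam (d : ℕ) (gp gm : Fin d → ℕ → ℤ) (s : ℕ) (y : Pt d) : Pt d :=
  if y.2 = (s : ℤ) then 0
  else (fun i => |y.1 i - Lfun d gp gm i (y.2 - (s : ℤ)).toNat|, y.2 - (s : ℤ))

/-- The set `H`, a piece of `Wedge(h₁,…,h_d)`. -/
def Hset (d : ℕ) (h : Fin d → ℕ → ℕ) (r s : ℕ) : Set (Pt d) :=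
  {y | ∃ n : ℕ, n ≤ r - s ∧ y.2 = (n : ℤ) ∧ ∀ i, 0 ≤ y.1 i ∧ y.1 i ≤ (h i n : ℤ)}

/-- Lemma 2.1: for every m ≥ 0 and x ∈ V, x ∈ ∂_m iff u(x) = m;
consequently the ∂_n are pairwise disjoint and their union is V. -/
theorem stmt_2
    (d : ℕ) (hd : 1 ≤ d) (f : Fin d → ℕ → ℝ≥0∞) (hf : ∀ i, Monotone (f i))
    (h : Fin d → ℕ → ℕ) (h0 : ∀ i, h i 0 = 0)
    (hrec : ∀ (i : Fin d) (n : ℕ),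
      ((h i n : ℝ≥0∞) + 1 ≤ f i (n + 1) ∧ h i (n + 1) = h i n + 1) ∨
      (¬ ((h i n : ℝ≥0∞) + 1 ≤ f i (n + 1)) ∧ h i (n + 1) = h i n)) :
    (∀ (m : ℕ), ∀ x ∈ V d f, (x ∈ bdry d f h m ↔ ufun d h x = m)) ∧
    (∀ m n : ℕ, m ≠ n → Disjoint (bdry d f h m) (bdry d f h n)) ∧
    (⋃ n : ℕ, bdry d f h n) = V d f := by
  classical
  haveI : Nonempty (Fin d) := ⟨⟨0, hd⟩⟩
  have hmono : ∀ i : Fin d, Monotone (h i) := fun i =>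
    monotone_nat_of_le_succ (fun n => by rcases hrec i n with ⟨_, e⟩ | ⟨_, e⟩ <;> omega)
  have hlef : ∀ i n, (h i n : ℝ≥0∞) ≤ f i n := by
    intro i n
    induction n with
    | zero => simp [h0]
    | succ n ih =>
      rcases hrec i n with ⟨hc, e⟩ | ⟨hc, e⟩
      · rw [e]; push_cast; exact hc
      · rw [e]; exact ih.trans (hf i (Nat.le_succ n))
  have hreach : ∀ (i : Fin d) (n a : ℕ), (a : ℝ≥0∞) ≤ f i n → a ≤ h i (n + a) := by
    intro i n a ha
    have key : ∀ k, min a k ≤ h i (n + k) := by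
      intro k
      induction k with
      | zero => simp
      | succ k ih =>
        by_cases hk : a ≤ h i (n + k)
        · exact le_trans (min_le_left _ _) (hk.trans (hmono i (Nat.le_succ _)))
        · have h1 : h i (n + k) + 1 ≤ a := by omega
          have h2 : (h i (n + k) : ℝ≥0∞) + 1 ≤ f i (n + k + 1) := by
            calc (h i (n + k) : ℝ≥0∞) + 1 = ((h i (n + k) + 1 : ℕ) : ℝ≥0∞) := by push_cast; ring
            _ ≤ (a : ℝ≥0∞) := by exact_mod_cast h1
            _ ≤ f i n := ha
            _ ≤ f i (n + k + 1) := hf i (by omega)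
          rcases hrec i (n + k) with ⟨_, e⟩ | ⟨hc, _⟩
          · have e' : h i (n + (k + 1)) = h i (n + k) + 1 := e
            omega
          · exact absurd h2 hc
    simpa using key a
  have pne : ∀ x ∈ V d f, ∀ i, {m : ℕ | x.1 i ≤ (h i m : ℤ)}.Nonempty := by
    intro x hx i
    refine ⟨x.2.toNat + (x.1 i).toNat, ?_⟩
    have := hreach i x.2.toNat (x.1 i).toNat (hx.2 i).2
    have h1 : 0 ≤ x.1 i := (hx.2 i).1
    simp only [Set.mem_setOf_eq]
    omega
  have pmem : ∀ x ∈ V d f, ∀ i, x.1 i ≤ (h i (pfun d h x i) : ℤ) :=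
    fun x hx i => Nat.sInf_mem (pne x hx i)
  have pch : ∀ x ∈ V d f, ∀ (i : Fin d) (m : ℕ),
      pfun d h x i ≤ m ↔ x.1 i ≤ (h i m : ℤ) := by
    intro x hx i m
    constructor
    · intro hp
      exact (pmem x hx i).trans (by exact_mod_cast hmono i hp)
    · intro hm; exact Nat.sInf_le hm
  have zeroV : (0 : Pt d) ∈ V d f := by
    refine ⟨le_refl 0, fun i => ⟨le_refl 0, ?_⟩⟩
    simp
  have bdry_sub_V : ∀ m, bdry d f h m ⊆ V d f := by
    intro m x hx
    rcases hx with hx | hx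
    · cases m with
      | zero =>
        have : x = 0 := hx
        subst this; exact zeroV
      | succ k =>
        obtain ⟨hx2, hx1⟩ := hx
        refine ⟨by omega, fun i => ⟨(hx1 i).1, ?_⟩⟩
        have h1 : (x.1 i).toNat ≤ h i (k + 1) := by
          have := (hx1 i).2; have := (hx1 i).1; omega
        have h2 : x.2.toNat = k + 1 := by omega
        rw [h2]
        calc ((x.1 i).toNat : ℝ≥0∞) ≤ (h i (k + 1) : ℝ≥0∞) := by exact_mod_cast h1
        _ ≤ f i (k + 1) := hlef i (k + 1)
    · simp only [Set.mem_iUnion] at hx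
      obtain ⟨i, hx⟩ := hx
      cases m with
      | zero =>
        have : x = 0 := hx
        subst this; exact zeroV
      | succ k => exact hx.2.1
  have uzero : ufun d h (0 : Pt d) = 0 := by
    have hp : pfun d h (0 : Pt d) = fun _ => 0 := by
      funext i
      refine Nat.eq_zero_of_le_zero (Nat.sInf_le ?_)
      simp [pfun]
    simp [ufun, hp]
  have main : ∀ (m : ℕ), ∀ x ∈ V d f, (x ∈ bdry d f h m ↔ ufun d h x = m) := by
    intro m x hx
    have hx2 : 0 ≤ x.2 := hx.1
    constructor
    · rintro (hb | hb)
      · cases m with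
        | zero =>
          have hx0 : x = 0 := hb
          rw [hx0]; exact uzero
        | succ k =>
          obtain ⟨hb2, hb1⟩ := hb
          show max x.2.toNat (Finset.univ.sup (pfun d h x)) = k + 1
          have h1 : x.2.toNat = k + 1 := by omega
          rw [h1, max_eq_left (Finset.sup_le fun i _ => (pch x hx i (k + 1)).2 (hb1 i).2)]
      · simp only [Set.mem_iUnion] at hb
        obtain ⟨i, hb⟩ := hb
        cases m with
        | zero =>
          have hx0 : x = 0 := hb
          rw [hx0]; exact uzero
        | succ k =>
          obtain ⟨hinc, hxV, hall, hieq, hle⟩ := hb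
          have hpik : ¬ pfun d h x i ≤ k := by
            rw [pch x hx i k]
            push_neg
            have : (h i k : ℤ) < (h i (k+1) : ℤ) := by exact_mod_cast (by omega : h i k < h i (k+1))
            omega
          have hpile : pfun d h x i ≤ k + 1 := (pch x hx i (k + 1)).2 (le_of_eq hieq)
          have hsup : Finset.univ.sup (pfun d h x) = k + 1 := by
            refine le_antisymm (Finset.sup_le fun j _ => (pch x hx j (k + 1)).2 (hall j)) ?_
            have := Finset.le_sup (f := pfun d h x) (Finset.mem_univ i)
            omega
          show max x.2.toNat (Finset.univ.sup (pfun d h x)) = k + 1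
          rw [hsup, max_eq_right (by omega)]
    · intro hu
      cases m with
      | zero =>
        have hn : x.2.toNat = 0 ∧ Finset.univ.sup (pfun d h x) = 0 := by
          have := hu
          unfold ufun at this
          omega
        have hx0 : x = 0 := by
          have hp : ∀ i, pfun d h x i = 0 := fun i =>
            Nat.eq_zero_of_le_zero (le_trans (Finset.le_sup (Finset.mem_univ i)) (le_of_eq hn.2))
          have hxi : ∀ i, x.1 i = 0 := by
            intro i
            have h1 := (pch x hx i 0).1 (le_of_eq (hp i))
            rw [h0 i] at h1
            have := (hx.2 i).1
            omega
          have : x.2 = 0 := by omega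
          exact Prod.ext (funext hxi) this
        rw [hx0]
        exact Or.inl rfl
      | succ k =>
        have hu' : max x.2.toNat (Finset.univ.sup (pfun d h x)) = k + 1 := hu
        by_cases htop : x.2.toNat = k + 1
        · refine Or.inl ?_
          refine ⟨by omega, fun i => ⟨(hx.2 i).1, ?_⟩⟩
          refine (pch x hx i (k + 1)).1 ?_
          have := Finset.le_sup (f := pfun d h x) (Finset.mem_univ i)
          omega
        · have hsup : Finset.univ.sup (pfun d h x) = k + 1 := by omega
          obtain ⟨i, _, hi⟩ := Finset.exists_mem_eq_sup Finset.univ Finset.univ_nonempty (pfun d h x)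
          have hpi : pfun d h x i = k + 1 := by omega
          have hub : x.1 i ≤ (h i (k + 1) : ℤ) := by
            have := pmem x hx i
            rwa [hpi] at this
          have hlb : ¬ x.1 i ≤ (h i k : ℤ) := by
            intro hc
            have := (pch x hx i k).2 hc
            omega
          have hcase : h i (k + 1) = h i k + 1 := by
            rcases hrec i k with ⟨_, e⟩ | ⟨_, e⟩
            · exact e
            · exfalso; rw [e] at hub; exact hlb hub
          refine Or.inr (Set.mem_iUnion.2 ⟨i, ?_⟩)
          refine ⟨hcase, hx, fun j => ?_, ?_, by omega⟩
          · refine (pch x hx j (k + 1)).1 ?_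
            have := Finset.le_sup (f := pfun d h x) (Finset.mem_univ j)
            omega
          · have : (h i k : ℤ) + 1 = (h i (k+1) : ℤ) := by exact_mod_cast (by omega : h i k + 1 = h i (k+1))
            omega
  refine ⟨main, ?_, ?_⟩
  · intro m n hmn
    rw [Set.disjoint_left]
    intro x hxm hxn
    have hV := bdry_sub_V m hxm
    exact hmn (((main m x hV).1 hxm).symm.trans ((main n x hV).1 hxn))
  · ext x
    simp only [Set.mem_iUnion]
    constructor
    · rintro ⟨n, hn⟩; exact bdry_sub_V n hn
    · intro hxV; exact ⟨ufun d h x, (main _ x hxV).2 rfl⟩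

end WedgePaper
end

section
/- (Lemma 2.2) Let x ∈ V and 1 ≤ i ≤ d+1, where e_i denotes the i-th standard unit vector of ℝ^{d+1}. If x + e_i ∈ V, then u(x + e_i) − u(x) ∈ {0, 1}. -/
open scoped ENNReal BigOperators

namespace WedgePaper

/-- The recursion defining `hᵢ` from `fᵢ`. -/
def IsGreedyBelow (F : ℕ → ℝ≥0∞) (g : ℕ → ℕ) : Prop :=
  ∀ n, ((g n : ℝ≥0∞) + 1 ≤ F (n + 1) ∧ g (n + 1) = g n + 1) ∨
    (¬ ((g n : ℝ≥0∞) + 1 ≤ F (n + 1)) ∧ g (n + 1) = g n)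

/-- Junk value `0` when `g` never reaches `a`. -/
noncomputable def hitTime (g : ℕ → ℕ) (a : ℤ) : ℕ :=
  sInf {m : ℕ | a ≤ (g m : ℤ)}

section HitTime

variable {g : ℕ → ℕ} {a b : ℤ} {m : ℕ}

theorem le_apply_hitTime (hne : ∃ m, a ≤ (g m : ℤ)) : a ≤ (g (hitTime g a) : ℤ) :=
  Nat.sInf_mem hne

theorem hitTime_le_iff (hg : Monotone g) (hne : ∃ m, a ≤ (g m : ℤ)) :
    hitTime g a ≤ m ↔ a ≤ (g m : ℤ) :=
  ⟨fun hm => (le_apply_hitTime hne).trans (Int.ofNat_le.2 (hg hm)), fun ha => Nat.sInf_le ha⟩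

theorem hitTime_mono (hab : a ≤ b) (hne : ∃ m, b ≤ (g m : ℤ)) :
    hitTime g a ≤ hitTime g b :=
  Nat.sInf_le (hab.trans (le_apply_hitTime hne))

end HitTime

namespace IsGreedyBelow

variable {F : ℕ → ℝ≥0∞} {g : ℕ → ℕ}

theorem succ_eq (hg : IsGreedyBelow F g) {n : ℕ} (hn : (g n : ℝ≥0∞) + 1 ≤ F (n + 1)) :
    g (n + 1) = g n + 1 := by
  rcases hg n with ⟨-, e⟩ | ⟨hlt, -⟩
  · exact e
  · exact absurd hn hlt

theorem monotone (hg : IsGreedyBelow F g) : Monotone g :=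
  monotone_nat_of_le_succ fun n => by rcases hg n with ⟨-, e⟩ | ⟨-, e⟩ <;> omega

theorem succ_eq_of_le (hg : IsGreedyBelow F g) (hF : Monotone F) {m n : ℕ} (hnm : n ≤ m)
    (hc : ((g m + 1 : ℕ) : ℝ≥0∞) ≤ F n) : g (m + 1) = g m + 1 :=
  hg.succ_eq <| by
    calc (g m : ℝ≥0∞) + 1 = ((g m + 1 : ℕ) : ℝ≥0∞) := by push_cast; rfl
      _ ≤ F n := hc
      _ ≤ F (m + 1) := hF (by omega)

theorem min_le_apply_add (hg : IsGreedyBelow F g) (hF : Monotone F) {n c : ℕ}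
    (hc : (c : ℝ≥0∞) ≤ F n) (k : ℕ) : min c k ≤ g (n + k) := by
  induction k with
  | zero => simp
  | succ k ih =>
    rw [← add_assoc]
    by_cases hck : c ≤ g (n + k)
    · exact (min_le_left _ _).trans (hck.trans (hg.monotone (Nat.le_succ _)))
    · have := hg.succ_eq_of_le hF (Nat.le_add_right n k) ((Nat.cast_le.2 (by omega)).trans hc)
      omega

theorem exists_le (hg : IsGreedyBelow F g) (hF : Monotone F) {n : ℕ} {a : ℤ}
    (ha : 0 ≤ a) (hc : (a.toNat : ℝ≥0∞) ≤ F n) : ∃ m, a ≤ (g m : ℤ) :=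
  ⟨n + a.toNat, by have := hg.min_le_apply_add hF hc a.toNat; omega⟩

/-- At time `max (hitTime g a) n` either `g` already exceeds `a`, or `g = a` lies strictly
below `F`, so that `g` increments at the next step. -/
theorem hitTime_add_one_le (hg : IsGreedyBelow F g) (hF : Monotone F) {n : ℕ} {a : ℤ}
    (ha : 0 ≤ a) (hc : ((a + 1).toNat : ℝ≥0∞) ≤ F n) :
    hitTime g (a + 1) ≤ max (hitTime g a) n + 1 := by
  have hne' := hg.exists_le hF (by omega) hc
  have hne : ∃ m, a ≤ (g m : ℤ) := hne'.imp fun m hm => by omega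
  rw [hitTime_le_iff hg.monotone hne']
  suffices ∀ m, hitTime g a ≤ m → n ≤ m → a + 1 ≤ (g (m + 1) : ℤ) from
    this _ (le_max_left _ _) (le_max_right _ _)
  intro m ham hnm
  have hm : a ≤ (g m : ℤ) := (hitTime_le_iff hg.monotone hne).1 ham
  by_cases hlt : a + 1 ≤ (g m : ℤ)
  · exact hlt.trans (Int.ofNat_le.2 (hg.monotone (Nat.le_succ m)))
  · have hgm : g m + 1 = (a + 1).toNat := by omega
    have := hg.succ_eq_of_le hF hnm (hgm ▸ hc)
    omega

end IsGreedyBelow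

section Height

variable {d : ℕ} {h : Fin d → ℕ → ℕ}

theorem pfun_eq_hitTime (x : Pt d) (i : Fin d) : pfun d h x i = hitTime (h i) (x.1 i) := rfl

theorem ufun_le_iff {x : Pt d} {m : ℕ} :
    ufun d h x ≤ m ↔ x.2.toNat ≤ m ∧ ∀ k, pfun d h x k ≤ m := by
  simp [ufun, Finset.sup_le_iff]

theorem pfun_le_ufun (x : Pt d) (k : Fin d) : pfun d h x k ≤ ufun d h x :=
  le_max_of_le_right (Finset.le_sup (Finset.mem_univ k))

theorem ufun_mono {x y : Pt d} (h2 : x.2 ≤ y.2) (hp : ∀ k, pfun d h x k ≤ pfun d h y k) :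
    ufun d h x ≤ ufun d h y :=
  max_le_max (Int.toNat_le_toNat h2) (Finset.sup_mono_fun fun k _ => hp k)

theorem ufun_le_ufun_add_one {x y : Pt d} (h2 : y.2 ≤ x.2 + 1)
    (hp : ∀ k, pfun d h y k ≤ max x.2.toNat (pfun d h x k) + 1) :
    ufun d h y ≤ ufun d h x + 1 := by
  refine ufun_le_iff.2 ⟨?_, fun k => (hp k).trans ?_⟩
  · have : x.2.toNat ≤ ufun d h x := le_max_left _ _
    omega
  · exact Nat.add_le_add_right (max_le (le_max_left _ _) (pfun_le_ufun x k)) 1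

theorem ufun_top_bounds (x : Pt d) :
    ufun d h x ≤ ufun d h (x.1, x.2 + 1) ∧ ufun d h (x.1, x.2 + 1) ≤ ufun d h x + 1 :=
  ⟨ufun_mono (by simp) fun _ => le_rfl,
    ufun_le_ufun_add_one le_rfl fun k => (le_max_right _ _).trans (Nat.le_succ _)⟩

theorem ufun_side_bounds {f : Fin d → ℕ → ℝ≥0∞} (hf : ∀ i, Monotone (f i))
    (hrec : ∀ i, IsGreedyBelow (f i) (h i)) {x : Pt d} (hx : x ∈ V d f) (j : Fin d)
    (hy : (Function.update x.1 j (x.1 j + 1), x.2) ∈ V d f) :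
    ufun d h x ≤ ufun d h (Function.update x.1 j (x.1 j + 1), x.2) ∧
      ufun d h (Function.update x.1 j (x.1 j + 1), x.2) ≤ ufun d h x + 1 := by
  set y : Pt d := (Function.update x.1 j (x.1 j + 1), x.2)
  have hc : ((x.1 j + 1).toNat : ℝ≥0∞) ≤ f j x.2.toNat := by
    simpa [y] using (hy.2 j).2
  have hxj : 0 ≤ x.1 j := (hx.2 j).1
  have hp_self : pfun d h y j = hitTime (h j) (x.1 j + 1) := by
    simp [y, pfun_eq_hitTime]
  have hp_ne : ∀ k ≠ j, pfun d h y k = pfun d h x k := by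
    intro k hk
    simp [y, pfun_eq_hitTime, Function.update_of_ne hk]
  refine ⟨ufun_mono le_rfl fun k => ?_, ufun_le_ufun_add_one (by simp [y]) fun k => ?_⟩
  · rcases eq_or_ne k j with rfl | hk
    · rw [hp_self]
      exact hitTime_mono (by omega) ((hrec k).exists_le (hf k) (by omega) hc)
    · exact (hp_ne k hk).ge
  · rcases eq_or_ne k j with rfl | hk
    · rw [hp_self, max_comm]
      exact (hrec k).hitTime_add_one_le (hf k) hxj hc
    · rw [hp_ne k hk]
      exact (le_max_right _ _).trans (Nat.le_succ _)

end Height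

theorem stmt_3_general
    (d : ℕ) (f : Fin d → ℕ → ℝ≥0∞) (hf : ∀ i, Monotone (f i))
    (h : Fin d → ℕ → ℕ)
    (hrec : ∀ (i : Fin d) (n : ℕ),
      ((h i n : ℝ≥0∞) + 1 ≤ f i (n + 1) ∧ h i (n + 1) = h i n + 1) ∨
      (¬ ((h i n : ℝ≥0∞) + 1 ≤ f i (n + 1)) ∧ h i (n + 1) = h i n)) :
    ∀ x ∈ V d f, ∀ i : Fin (d + 1), addE d x i ∈ V d f →
      ufun d h (addE d x i) = ufun d h x ∨ ufun d h (addE d x i) = ufun d h x + 1 := by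
  intro x hx i hi
  suffices ufun d h x ≤ ufun d h (addE d x i) ∧ ufun d h (addE d x i) ≤ ufun d h x + 1 by
    omega
  by_cases hlt : (i : ℕ) < d
  · rw [addE, dif_pos hlt] at hi ⊢
    exact ufun_side_bounds hf hrec hx _ hi
  · rw [addE, dif_neg hlt]
    exact ufun_top_bounds x

/-- Lemma 2.2: if x ∈ V and x + eᵢ ∈ V then u(x+eᵢ) - u(x) ∈ {0,1}. -/
theorem stmt_3
    (d : ℕ) (hd : 1 ≤ d) (f : Fin d → ℕ → ℝ≥0∞) (hf : ∀ i, Monotone (f i))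
    (h : Fin d → ℕ → ℕ) (h0 : ∀ i, h i 0 = 0)
    (hrec : ∀ (i : Fin d) (n : ℕ),
      ((h i n : ℝ≥0∞) + 1 ≤ f i (n + 1) ∧ h i (n + 1) = h i n + 1) ∨
      (¬ ((h i n : ℝ≥0∞) + 1 ≤ f i (n + 1)) ∧ h i (n + 1) = h i n)) :
    ∀ x ∈ V d f, ∀ i : Fin (d + 1), addE d x i ∈ V d f →
      ufun d h (addE d x i) = ufun d h x ∨ ufun d h (addE d x i) = ufun d h x + 1 :=
  stmt_3_general d f hf h hrec

end WedgePaper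
end

section
/- Fix 1 ≤ i ≤ d and an integer N ≥ 1, and suppose {m ∈ ℕ : h_i(m) ≥ N} is nonempty. Let p = min{m : h_i(m) ≥ N} and k = min{m : f_i(m) ≥ N}. Then k ≤ p, h_i(p) = N, h_i(m) = h_i(m−1) + 1 for every m with k < m ≤ p, and hence h_i(p) − h_i(k) = p − k. -/
open scoped ENNReal BigOperators

namespace WedgePaper

/-- with p = min{m : hᵢ(m) ≥ N} and k = min{m : fᵢ(m) ≥ N}: k ≤ p,
hᵢ(p) = N, hᵢ(m) = hᵢ(m-1) + 1 for k < m ≤ p, and hᵢ(p) - hᵢ(k) = p - k. -/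
theorem stmt_5
    (d : ℕ) (hd : 1 ≤ d) (f : Fin d → ℕ → ℝ≥0∞) (hf : ∀ i, Monotone (f i))
    (h : Fin d → ℕ → ℕ) (h0 : ∀ i, h i 0 = 0)
    (hrec : ∀ (i : Fin d) (n : ℕ),
      ((h i n : ℝ≥0∞) + 1 ≤ f i (n + 1) ∧ h i (n + 1) = h i n + 1) ∨
      (¬ ((h i n : ℝ≥0∞) + 1 ≤ f i (n + 1)) ∧ h i (n + 1) = h i n))
    (i : Fin d) (N : ℕ) (hN : 1 ≤ N) (hne : ∃ m : ℕ, N ≤ h i m) :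
    sInf {m : ℕ | (N : ℝ≥0∞) ≤ f i m} ≤ sInf {m : ℕ | N ≤ h i m} ∧
    h i (sInf {m : ℕ | N ≤ h i m}) = N ∧
    (∀ m : ℕ, sInf {m' : ℕ | (N : ℝ≥0∞) ≤ f i m'} < m → m ≤ sInf {m' : ℕ | N ≤ h i m'} →
      h i m = h i (m - 1) + 1) ∧
    h i (sInf {m : ℕ | N ≤ h i m}) - h i (sInf {m : ℕ | (N : ℝ≥0∞) ≤ f i m}) =
      sInf {m : ℕ | N ≤ h i m} - sInf {m : ℕ | (N : ℝ≥0∞) ≤ f i m} := by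
  -- h i n ≤ f i n
  have hle : ∀ n, (h i n : ℝ≥0∞) ≤ f i n := by
    intro n
    induction n with
    | zero => simp [h0 i]
    | succ n ih =>
      rcases hrec i n with ⟨hb, he⟩ | ⟨hb, he⟩
      · rw [he]; push_cast; exact hb
      · rw [he]; exact ih.trans (hf i (Nat.le_succ n))
  set p := sInf {m : ℕ | N ≤ h i m} with hpdef
  set k := sInf {m : ℕ | (N : ℝ≥0∞) ≤ f i m} with hkdef
  have hp : N ≤ h i p := Nat.sInf_mem hne
  have hfp : (N : ℝ≥0∞) ≤ f i p := by
    calc (N : ℝ≥0∞) ≤ (h i p : ℝ≥0∞) := by exact_mod_cast hp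
    _ ≤ f i p := hle p
  have hkp : k ≤ p := Nat.sInf_le hfp
  have hfk : (N : ℝ≥0∞) ≤ f i k := Nat.sInf_mem (s := {m : ℕ | (N : ℝ≥0∞) ≤ f i m}) ⟨p, hfp⟩
  -- h i p = N
  have hp1 : 1 ≤ p := by
    rcases Nat.eq_zero_or_pos p with h' | h'
    · exfalso; rw [h', h0 i] at hp; omega
    · exact h'
  have hprev : h i (p - 1) < N := by
    by_contra hc
    push_neg at hc
    have := Nat.sInf_le (s := {m : ℕ | N ≤ h i m}) hc
    omega
  have hpN : h i p = N := by
    obtain ⟨q, hq⟩ : ∃ q, p = q + 1 := ⟨p - 1, by omega⟩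
    have : h i (q+1) ≤ h i q + 1 := by
      rcases hrec i q with ⟨_, he⟩ | ⟨_, he⟩ <;> omega
    rw [hq] at hp ⊢
    have : h i q < N := by simpa [hq] using hprev
    omega
  -- step
  have hstep : ∀ m : ℕ, k < m → m ≤ p → h i m = h i (m - 1) + 1 := by
    intro m hkm hmp
    obtain ⟨q, rfl⟩ : ∃ q, m = q + 1 := ⟨m - 1, by omega⟩
    simp only [Nat.add_sub_cancel]
    rcases hrec i q with ⟨_, he⟩ | ⟨hb, _⟩
    · exact he
    · exfalso
      have hfq : (N : ℝ≥0∞) ≤ f i (q + 1) := hfk.trans (hf i (by omega))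
      have : (N : ℝ≥0∞) < ((h i q + 1 : ℕ) : ℝ≥0∞) := by
        push_cast
        exact lt_of_le_of_lt hfq (lt_of_not_ge hb)
      have hNq : N ≤ h i q := by
        have := Nat.cast_lt (α := ℝ≥0∞) |>.mp this
        omega
      have := Nat.sInf_le (s := {m : ℕ | N ≤ h i m}) hNq
      omega
  refine ⟨hkp, hpN, hstep, ?_⟩
  have key : ∀ j : ℕ, k + j ≤ p → h i (k + j) = h i k + j := by
    intro j
    induction j with
    | zero => simp
    | succ j ih =>
      intro hj
      show h i (k + j + 1) = h i k + (j + 1)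
      have h1 := hstep (k + j + 1) (by omega) (by omega)
      have h2 := ih (by omega)
      simp only [Nat.add_sub_cancel] at h1
      omega
  have := key (p - k) (by omega)
  have hkp' : k + (p - k) = p := by omega
  rw [hkp'] at this
  omega

end WedgePaper
end

section
/- (Lemma 2.3) For each n ≥ 0, the set ∂_n is finite and ∏_{i=1}^d (h_i(n) + 1) ≤ |∂_n| ≤ (d+1) ∏_{i=1}^d (h_i(n) + 1). -/
open scoped ENNReal BigOperators

namespace WedgePaper

/-!
A point of the side face `Δᵢ(n+1)` sits at some height `t ≤ n+1` with `xᵢ = hᵢ(n+1) ≤ fᵢ(t)`.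
Since `fᵢ` is increasing, `fᵢ` stays above `hᵢ + 1` on `[t, n+1)`, so `hᵢ` climbs at every step
there and `n + 1 - t ≤ hᵢ(n+1)`. Hence replacing the coordinate `xᵢ` by `n + 1 - t` and the height
by `n + 1` maps `Δᵢ(n+1)` injectively into the top face `Δ_{d+1}(n+1)`, a box with
`∏ᵢ (hᵢ(n+1) + 1)` points. So each of the `d + 1` faces has at most that many points, and the top
face, contained in `∂_n`, has exactly that many.
-/

def IsGreedyStaircase {d : ℕ} (f : Fin d → ℕ → ℝ≥0∞) (h : Fin d → ℕ → ℕ) : Prop :=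
  ∀ (i : Fin d) (n : ℕ),
    ((h i n : ℝ≥0∞) + 1 ≤ f i (n + 1) ∧ h i (n + 1) = h i n + 1) ∨
    (¬ ((h i n : ℝ≥0∞) + 1 ≤ f i (n + 1)) ∧ h i (n + 1) = h i n)

namespace IsGreedyStaircase

variable {d : ℕ} {f : Fin d → ℕ → ℝ≥0∞} {h : Fin d → ℕ → ℕ}

theorem succ_eq (hrec : IsGreedyStaircase f h) {i : Fin d} {n : ℕ}
    (hle : (h i n : ℝ≥0∞) + 1 ≤ f i (n + 1)) : h i (n + 1) = h i n + 1 := by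
  rcases hrec i n with ⟨_, e⟩ | ⟨hc, _⟩
  exacts [e, absurd hle hc]

theorem monotone (hrec : IsGreedyStaircase f h) (i : Fin d) : Monotone (h i) :=
  monotone_nat_of_le_succ fun n => by rcases hrec i n with ⟨_, e⟩ | ⟨_, e⟩ <;> omega

theorem add_sub_le (hrec : IsGreedyStaircase f h) {i : Fin d} (hf : Monotone (f i))
    {t s : ℕ} (hts : t ≤ s) (hclimb : ∀ m, t ≤ m → m < s → (h i m : ℝ≥0∞) + 1 ≤ f i t) :
    h i t + (s - t) ≤ h i s := by
  induction s, hts using Nat.le_induction with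
  | base => simp
  | succ s hts ih =>
    have hstep := hrec.succ_eq ((hclimb s hts (by omega)).trans (hf (by omega)))
    have := ih fun m hm hms => hclimb m hm (by omega)
    omega

theorem le_add_height_of_mem_DeltaSide (hrec : IsGreedyStaircase f h) {i : Fin d}
    (hf : Monotone (f i)) {n : ℕ} {x : Pt d} (hx : x ∈ DeltaSide d f h i (n + 1)) :
    (n : ℤ) + 1 ≤ h i (n + 1) + x.2 := by
  obtain ⟨hstep, ⟨hx0, hxV⟩, -, hxi, hxn⟩ := hx
  have hft : (h i (n + 1) : ℝ≥0∞) ≤ f i x.2.toNat := by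
    simpa [hxi] using (hxV i).2
  have hclimb : ∀ m, x.2.toNat ≤ m → m < n + 1 → (h i m : ℝ≥0∞) + 1 ≤ f i x.2.toNat := by
    intro m _ hm
    have : h i m + 1 ≤ h i (n + 1) := by
      have := hrec.monotone i (Nat.le_of_lt_succ hm)
      omega
    exact le_trans (by exact_mod_cast this) hft
  have := hrec.add_sub_le hf (by omega) hclimb
  omega

end IsGreedyStaircase

def sideToTop {d : ℕ} (i : Fin d) (m : ℤ) (x : Pt d) : Pt d :=
  (Function.update x.1 i (m - x.2), m)

theorem sideToTop_injOn {d : ℕ} (i : Fin d) (m c : ℤ) :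
    Set.InjOn (sideToTop i m) {x : Pt d | x.1 i = c} := by
  intro x (hx : x.1 i = c) y (hy : y.1 i = c) hxy
  have hfst := congrArg Prod.fst hxy
  have h2 : x.2 = y.2 := by
    have := congrFun hfst i
    simp only [sideToTop, Function.update_self] at this
    omega
  refine Prod.ext (funext fun j => ?_) h2
  by_cases hj : j = i
  · rw [hj, hx, hy]
  · simpa [sideToTop, Function.update_of_ne hj] using congrFun hfst j

section Faces

variable {d : ℕ} {f : Fin d → ℕ → ℝ≥0∞} {h : Fin d → ℕ → ℕ}

theorem DeltaTop_succ_eq (n : ℕ) :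
    DeltaTop d h (n + 1) =
      ↑((Fintype.piFinset fun i => Finset.Icc (0 : ℤ) (h i (n + 1))) ×ˢ {(n : ℤ) + 1}) := by
  ext x
  simp only [DeltaTop, Set.mem_ofPred_eq, Finset.coe_product, Finset.coe_singleton,
    Set.mem_prod, Set.mem_singleton_iff, Finset.mem_coe, Fintype.mem_piFinset, Finset.mem_Icc]
  tauto

theorem finite_DeltaTop (n : ℕ) : (DeltaTop d h n).Finite := by
  cases n with
  | zero => exact Set.finite_singleton _
  | succ n => rw [DeltaTop_succ_eq]; exact Finset.finite_toSet _

theorem ncard_DeltaTop_succ (n : ℕ) :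
    (DeltaTop d h (n + 1)).ncard = ∏ i, (h i (n + 1) + 1) := by
  rw [DeltaTop_succ_eq, Set.ncard_coe_finset, Finset.card_product, Fintype.card_piFinset]
  simp [Int.card_Icc]

theorem ncard_DeltaTop (h0 : ∀ i, h i 0 = 0) (n : ℕ) :
    (DeltaTop d h n).ncard = ∏ i, (h i n + 1) := by
  cases n with
  | zero => simp [DeltaTop, h0]
  | succ n => exact ncard_DeltaTop_succ n

theorem mapsTo_sideToTop (hrec : IsGreedyStaircase f h) {i : Fin d} (hf : Monotone (f i))
    (n : ℕ) : Set.MapsTo (sideToTop i ((n : ℤ) + 1)) (DeltaSide d f h i (n + 1))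
      (DeltaTop d h (n + 1)) := by
  intro x hx
  have hheight := hrec.le_add_height_of_mem_DeltaSide hf hx
  obtain ⟨-, ⟨-, hxV⟩, hle, -, hxn⟩ := hx
  refine ⟨rfl, fun j => ?_⟩
  by_cases hj : j = i
  · subst hj
    simp only [sideToTop, Function.update_self]
    omega
  · simpa only [sideToTop, Function.update_of_ne hj] using ⟨(hxV j).1, hle j⟩

theorem DeltaSide_succ_subset (i : Fin d) (n : ℕ) :
    DeltaSide d f h i (n + 1) ⊆ {x | x.1 i = h i (n + 1)} :=
  fun _ hx => hx.2.2.2.1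

theorem finite_DeltaSide (hrec : IsGreedyStaircase f h) {i : Fin d} (hf : Monotone (f i))
    (n : ℕ) : (DeltaSide d f h i n).Finite := by
  cases n with
  | zero => exact Set.finite_singleton _
  | succ n =>
    exact Set.Finite.of_finite_image
      ((finite_DeltaTop (n + 1)).subset (mapsTo_sideToTop hrec hf n).image_subset)
      ((sideToTop_injOn i _ _).mono (DeltaSide_succ_subset i n))

theorem ncard_DeltaSide_le (hrec : IsGreedyStaircase f h) {i : Fin d} (hf : Monotone (f i))
    (n : ℕ) : (DeltaSide d f h i n).ncard ≤ ∏ j, (h j n + 1) := by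
  cases n with
  | zero =>
    simpa [DeltaSide] using Finset.one_le_prod' fun j _ => Nat.le_add_left 1 (h j 0)
  | succ n =>
    rw [← ncard_DeltaTop_succ]
    exact Set.ncard_le_ncard_of_injOn _ (mapsTo_sideToTop hrec hf n)
      ((sideToTop_injOn i _ _).mono (DeltaSide_succ_subset i n)) (finite_DeltaTop _)

end Faces

theorem stmt_7_general
    (d : ℕ) (f : Fin d → ℕ → ℝ≥0∞) (hf : ∀ i, Monotone (f i))
    (h : Fin d → ℕ → ℕ) (h0 : ∀ i, h i 0 = 0)
    (hrec : ∀ (i : Fin d) (n : ℕ),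
      ((h i n : ℝ≥0∞) + 1 ≤ f i (n + 1) ∧ h i (n + 1) = h i n + 1) ∨
      (¬ ((h i n : ℝ≥0∞) + 1 ≤ f i (n + 1)) ∧ h i (n + 1) = h i n)) :
    ∀ n : ℕ, (bdry d f h n).Finite ∧
      (∏ i : Fin d, (h i n + 1)) ≤ (bdry d f h n).ncard ∧
      (bdry d f h n).ncard ≤ (d + 1) * ∏ i : Fin d, (h i n + 1) := by
  intro n
  have hfin : (bdry d f h n).Finite :=
    (finite_DeltaTop n).union (Set.finite_iUnion fun i => finite_DeltaSide hrec (hf i) n)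
  refine ⟨hfin, ?_, ?_⟩
  · rw [← ncard_DeltaTop h0 n]
    exact Set.ncard_le_ncard Set.subset_union_left hfin
  · calc (bdry d f h n).ncard
        ≤ (DeltaTop d h n).ncard + ∑ i, (DeltaSide d f h i n).ncard :=
          (Set.ncard_union_le _ _).trans
            (Nat.add_le_add_left (Set.ncard_iUnion_le_of_fintype _) _)
      _ ≤ ∏ i, (h i n + 1) + ∑ _i : Fin d, ∏ i, (h i n + 1) := by
          rw [ncard_DeltaTop h0 n]
          gcongr with i
          exact ncard_DeltaSide_le hrec (hf i) n
      _ = (d + 1) * ∏ i, (h i n + 1) := by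
          rw [Finset.sum_const, Finset.card_univ, Fintype.card_fin, smul_eq_mul]
          ring

/-- Lemma 2.3: ∂_n is finite and
∏ᵢ (hᵢ(n)+1) ≤ |∂_n| ≤ (d+1) ∏ᵢ (hᵢ(n)+1). -/
theorem stmt_7
    (d : ℕ) (hd : 1 ≤ d) (f : Fin d → ℕ → ℝ≥0∞) (hf : ∀ i, Monotone (f i))
    (h : Fin d → ℕ → ℕ) (h0 : ∀ i, h i 0 = 0)
    (hrec : ∀ (i : Fin d) (n : ℕ),
      ((h i n : ℝ≥0∞) + 1 ≤ f i (n + 1) ∧ h i (n + 1) = h i n + 1) ∨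
      (¬ ((h i n : ℝ≥0∞) + 1 ≤ f i (n + 1)) ∧ h i (n + 1) = h i n)) :
    ∀ n : ℕ, (bdry d f h n).Finite ∧
      (∏ i : Fin d, (h i n + 1)) ≤ (bdry d f h n).ncard ∧
      (bdry d f h n).ncard ≤ (d + 1) * ∏ i : Fin d, (h i n + 1) :=
  stmt_7_general d f hf h h0 hrec

end WedgePaper
end

section
/- (Lemma 3.1, flow/Thomson form) For every r ≥ 1 and every unit flow θ from the origin O to the set ∂_r on Wedge(f_1,…,f_d), the energy satisfies E(θ) ≥ (1/(2(d+1)²)) · ∑_{n=0}^{r−1} ∏_{i=1}^d 1/(h_i(n) + 1). -/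
/-!
For `n < r` the box `Bₙ = {x ≥ 0 : u(x) ≤ n}` contains `O` and misses `∂_r`, so the unit flow
crosses the edge boundary of `Bₙ` with net amount `1`. An edge leaves `Bₙ` either upwards through
the top face, or sideways through a face `xᵢ = hᵢ(n)` at a height `m` with `fᵢ(m) > hᵢ(n)`; the
latter forces `hᵢ` to climb at every step from `m` to `n`, so `n - m ≤ hᵢ(n)`. Hence the boundary
of `Bₙ` has at most `(d+1) ∏ᵢ (hᵢ(n)+1)` edges. These boundaries are disjoint for distinct `n`
(an edge leaving `Bₙ` ends in `Bₙ₊₁`), and Cauchy–Schwarz on each of them (the Nash-Williams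
inequality) gives `E(θ) ≥ ½ ∑_{n<r} 1 / ((d+1) ∏ᵢ (hᵢ(n)+1))`.
-/

open scoped ENNReal BigOperators

namespace WedgePaper

theorem sum_sum_eq_zero_of_antisymm {α : Type*} {θ : α → α → ℝ} (hθ : ∀ v w, θ v w = -θ w v)
    (s : Finset α) : ∑ v ∈ s, ∑ w ∈ s, θ v w = 0 := by
  have : ∑ v ∈ s, ∑ w ∈ s, θ v w = -∑ v ∈ s, ∑ w ∈ s, θ v w := by
    calc ∑ v ∈ s, ∑ w ∈ s, θ v w = ∑ v ∈ s, ∑ w ∈ s, -θ w v :=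
          Finset.sum_congr rfl fun v _ => Finset.sum_congr rfl fun w _ => hθ v w
      _ = -∑ w ∈ s, ∑ v ∈ s, θ w v := by
          simp only [Finset.sum_neg_distrib]; rw [Finset.sum_comm]
  linarith

theorem sum_sum_eq_sum_sum_sdiff_of_antisymm {α : Type*} [DecidableEq α] {θ : α → α → ℝ}
    (hθ : ∀ v w, θ v w = -θ w v) {s t : Finset α} (hst : s ⊆ t) :
    ∑ v ∈ s, ∑ w ∈ t, θ v w = ∑ v ∈ s, ∑ w ∈ t \ s, θ v w := by
  simp only [← Finset.sum_sdiff hst, Finset.sum_add_distrib,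
    sum_sum_eq_zero_of_antisymm hθ, add_zero]

/-- The Nash-Williams inequality. -/
theorem ofReal_sum_one_div_le_tsum_sq {ι α : Type*} (θ : α → ℝ) (s : Finset ι)
    (C : ι → Finset α) (N : ι → ℕ) (hC : (s : Set ι).PairwiseDisjoint C)
    (hθC : ∀ n ∈ s, ∑ p ∈ C n, θ p = 1) (hN : ∀ n ∈ s, (C n).card ≤ N n) :
    ENNReal.ofReal (∑ n ∈ s, 1 / (N n : ℝ)) ≤ ∑' p, ENNReal.ofReal (θ p ^ 2) := by
  classical
  have hcut : ∀ n ∈ s, 1 / (N n : ℝ) ≤ ∑ p ∈ C n, θ p ^ 2 := by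
    intro n hn
    have hcs := sq_sum_le_card_mul_sum_sq (s := C n) (f := θ)
    rw [hθC n hn, one_pow] at hcs
    have hN' : ((C n).card : ℝ) ≤ N n := by exact_mod_cast hN n hn
    rcases (Nat.cast_nonneg (α := ℝ) (N n)).eq_or_lt with h0 | hpos
    · rw [← h0, div_zero]; positivity
    · rw [div_le_iff₀' hpos]
      nlinarith [Finset.sum_nonneg fun p (_ : p ∈ C n) => sq_nonneg (θ p)]
  calc ENNReal.ofReal (∑ n ∈ s, 1 / (N n : ℝ))
      ≤ ENNReal.ofReal (∑ n ∈ s, ∑ p ∈ C n, θ p ^ 2) :=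
        ENNReal.ofReal_le_ofReal (Finset.sum_le_sum hcut)
    _ = ∑ p ∈ s.biUnion C, ENNReal.ofReal (θ p ^ 2) := by
        rw [Finset.sum_biUnion hC, ENNReal.ofReal_sum_of_nonneg
          fun n _ => Finset.sum_nonneg fun p _ => sq_nonneg _]
        exact Finset.sum_congr rfl fun n _ =>
          ENNReal.ofReal_sum_of_nonneg fun p _ => sq_nonneg _
    _ ≤ ∑' p, ENNReal.ofReal (θ p ^ 2) := ENNReal.sum_le_tsum _

theorem dist1_eq_one {d : ℕ} {v w : Pt d} (hvw : dist1 d v w = 1) :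
    w = (v.1, v.2 + 1) ∨ w = (v.1, v.2 - 1) ∨
      (∃ i, w = (Function.update v.1 i (v.1 i + 1), v.2)) ∨
      ∃ i, w = (Function.update v.1 i (v.1 i - 1), v.2) := by
  have habs : ∀ s : Finset (Fin d), 0 ≤ ∑ j ∈ s, |v.1 j - w.1 j| :=
    fun s => Finset.sum_nonneg fun j _ => abs_nonneg _
  have heq : ∀ s : Finset (Fin d), ∑ j ∈ s, |v.1 j - w.1 j| = 0 → ∀ j ∈ s, w.1 j = v.1 j :=
    fun s hs j hj => by
      have := (Finset.sum_eq_zero_iff_of_nonneg fun j _ => abs_nonneg _).1 hs j hj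
      rw [abs_eq_zero] at this
      omega
  unfold dist1 at hvw
  rcases (abs_nonneg (v.2 - w.2)).eq_or_lt with hb | hb
  · obtain ⟨i, -, hi⟩ := Finset.exists_ne_zero_of_sum_ne_zero (s := Finset.univ)
      (f := fun j => |v.1 j - w.1 j|) (by omega)
    have hsplit := Finset.add_sum_erase Finset.univ (fun j => |v.1 j - w.1 j|) (Finset.mem_univ i)
    have hi1 : |v.1 i - w.1 i| = 1 := by
      have := habs (Finset.univ.erase i); have := abs_nonneg (v.1 i - w.1 i); omega
    have hrest : ∀ j, j ≠ i → w.1 j = v.1 j := fun j hj =>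
      heq (Finset.univ.erase i) (by omega) j (Finset.mem_erase.2 ⟨hj, Finset.mem_univ j⟩)
    have hw2 : w.2 = v.2 := by have := abs_eq_zero.1 hb.symm; omega
    have hw1 : w.1 = Function.update v.1 i (w.1 i) := funext fun j => by
      rcases eq_or_ne j i with rfl | hj
      · simp
      · simp [Function.update_of_ne hj, hrest j hj]
    rcases abs_eq (zero_le_one' ℤ) |>.1 hi1 with hi | hi
    · exact .inr <| .inr <| .inr
        ⟨i, Prod.ext (hw1.trans (by rw [show w.1 i = v.1 i - 1 by omega])) hw2⟩
    · exact .inr <| .inr <| .inl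
        ⟨i, Prod.ext (hw1.trans (by rw [show w.1 i = v.1 i + 1 by omega])) hw2⟩
  · have hw1 : w.1 = v.1 := funext fun j =>
      heq Finset.univ (by have := habs Finset.univ; omega) j (Finset.mem_univ j)
    have hb1 : |v.2 - w.2| = 1 := by have := habs Finset.univ; omega
    rcases abs_eq (zero_le_one' ℤ) |>.1 hb1 with h2 | h2
    · right; left; exact Prod.ext hw1 (by omega)
    · left; exact Prod.ext hw1 (by omega)

section Wedge

variable {d : ℕ} {f : Fin d → ℕ → ℝ≥0∞} {h : Fin d → ℕ → ℕ}

def IsHeight (f : Fin d → ℕ → ℝ≥0∞) (h : Fin d → ℕ → ℕ) : Prop :=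
  ∀ (i : Fin d) (n : ℕ),
    ((h i n : ℝ≥0∞) + 1 ≤ f i (n + 1) ∧ h i (n + 1) = h i n + 1) ∨
    (¬ ((h i n : ℝ≥0∞) + 1 ≤ f i (n + 1)) ∧ h i (n + 1) = h i n)

theorem IsHeight.monotone (hh : IsHeight f h) (i : Fin d) : Monotone (h i) :=
  monotone_nat_of_le_succ fun n => by rcases hh i n with ⟨_, e⟩ | ⟨_, e⟩ <;> omega

theorem IsHeight.succ_eq (hh : IsHeight f h) {i : Fin d} {n : ℕ}
    (hfn : (h i n : ℝ≥0∞) + 1 ≤ f i (n + 1)) : h i (n + 1) = h i n + 1 := by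
  rcases hh i n with ⟨_, e⟩ | ⟨hne, _⟩
  exacts [e, absurd hfn hne]

/-- If `fᵢ(m)` has room above `hᵢ(n)`, then `hᵢ` climbs at every step from `m` to `n`. -/
theorem IsHeight.sub_le (hf : ∀ i, Monotone (f i)) (hh : IsHeight f h) {i : Fin d} {m n : ℕ}
    (hfm : (h i n : ℝ≥0∞) + 1 ≤ f i m) : n - m ≤ h i n := by
  suffices ∀ k, m ≤ k → k ≤ n → k - m ≤ h i k by
    rcases le_total m n with hmn | hnm
    · exact this n hmn le_rfl
    · omega
  intro k hmk
  induction k, hmk using Nat.le_induction with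
  | base => simp
  | succ k hmk ih =>
    intro hkn
    have hk : h i k ≤ h i n := hh.monotone i (by omega)
    have hstep : h i (k + 1) = h i k + 1 := hh.succ_eq <|
      calc (h i k : ℝ≥0∞) + 1 ≤ h i n + 1 := by gcongr
        _ ≤ f i m := hfm
        _ ≤ f i (k + 1) := hf i (by omega)
    have := ih (by omega)
    omega

/-- The points `x ≥ 0` with `u(x) ≤ n`. -/
noncomputable def Box (h : Fin d → ℕ → ℕ) (n : ℕ) : Finset (Pt d) :=
  (Fintype.piFinset fun i => Finset.Icc 0 (h i n : ℤ)) ×ˢ Finset.Icc 0 (n : ℤ)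

theorem mem_Box {n : ℕ} {v : Pt d} :
    v ∈ Box h n ↔ (∀ i, 0 ≤ v.1 i ∧ v.1 i ≤ h i n) ∧ 0 ≤ v.2 ∧ v.2 ≤ n := by
  simp [Box, Fintype.mem_piFinset]

theorem zero_mem_Box (n : ℕ) : (0 : Pt d) ∈ Box h n :=
  mem_Box.2 ⟨fun _ => ⟨le_rfl, by simp⟩, le_rfl, by simp⟩

theorem ufun_le_of_mem_Box {n : ℕ} {v : Pt d} (hv : v ∈ Box h n) : ufun d h v ≤ n := by
  obtain ⟨hv1, -, hv2⟩ := mem_Box.1 hv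
  exact max_le (by omega) (Finset.sup_le fun i _ => Nat.sInf_le (hv1 i).2)

theorem IsHeight.monotone_Box (hh : IsHeight f h) : Monotone (Box h) := by
  intro m n hmn v hv
  obtain ⟨hv1, hv2, hv3⟩ := mem_Box.1 hv
  refine mem_Box.2 ⟨fun i => ⟨(hv1 i).1, ?_⟩, hv2, by omega⟩
  exact (hv1 i).2.trans (by exact_mod_cast hh.monotone i hmn)

theorem edge_of_mem_Box_of_not_mem_Box {n : ℕ} {v w : Pt d} (hv : v ∈ Box h n)
    (hw : w ∉ Box h n) (hvw : Edge d f v w) :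
    (v.2 = n ∧ w = (v.1, v.2 + 1)) ∨
      ∃ i, v.1 i = h i n ∧ (h i n : ℝ≥0∞) + 1 ≤ f i v.2.toNat ∧
        w = (Function.update v.1 i (v.1 i + 1), v.2) := by
  obtain ⟨hv1, hv2, hv3⟩ := mem_Box.1 hv
  obtain ⟨-, ⟨hw2, hw1⟩, hdist⟩ := hvw
  rw [mem_Box] at hw
  rcases dist1_eq_one hdist with rfl | rfl | ⟨i, rfl⟩ | ⟨i, rfl⟩
  · exact .inl ⟨by by_contra; exact hw ⟨hv1, by omega, by omega⟩, rfl⟩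
  · exact absurd ⟨hv1, hw2, by omega⟩ hw
  · have hvi : v.1 i = h i n := by
      by_contra hne
      refine hw ⟨fun j => ?_, hv2, hv3⟩
      rcases eq_or_ne j i with rfl | hj
      · simp only [Function.update_self]; have := hv1 j; omega
      · simpa [Function.update_of_ne hj] using hv1 j
    refine .inr ⟨i, hvi, ?_, rfl⟩
    have hfi := (hw1 i).2
    simp only [Function.update_self, hvi] at hfi
    exact_mod_cast hfi
  · refine absurd ⟨fun j => ?_, hv2, hv3⟩ hw
    rcases eq_or_ne j i with rfl | hj
    · have := (hw1 j).1; have := hv1 j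
      simp only [Function.update_self] at *; omega
    · simpa [Function.update_of_ne hj] using hv1 j

theorem IsHeight.mem_Box_succ_of_edge (hf : ∀ i, Monotone (f i)) (hh : IsHeight f h) {n : ℕ}
    {v w : Pt d} (hv : v ∈ Box h n) (hvw : Edge d f v w) : w ∈ Box h (n + 1) := by
  by_cases hw : w ∈ Box h n
  · exact hh.monotone_Box n.le_succ hw
  obtain ⟨hv1, hv2, hv3⟩ := mem_Box.1 hv
  rcases edge_of_mem_Box_of_not_mem_Box hv hw hvw with ⟨hvn, rfl⟩ | ⟨i, hvi, hfi, rfl⟩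
  · exact mem_Box.2 ⟨(mem_Box.1 (hh.monotone_Box n.le_succ hv)).1, by omega, by push_cast; omega⟩
  have hsucc : h i (n + 1) = h i n + 1 :=
    hh.succ_eq (hfi.trans (hf i (by omega)))
  refine mem_Box.2 ⟨fun j => ?_, hv2, by push_cast; omega⟩
  rcases eq_or_ne j i with rfl | hj
  · simp only [Function.update_self, hsucc]; push_cast; omega
  · simpa [Function.update_of_ne hj] using
      (mem_Box.1 (hh.monotone_Box n.le_succ hv)).1 j

theorem IsFlow.divg_eq_sum_Box_succ (hf : ∀ i, Monotone (f i)) (hh : IsHeight f h)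
    {θ : Pt d → Pt d → ℝ} (hθ : IsFlow d f θ) {n : ℕ} {v : Pt d} (hv : v ∈ Box h n) :
    divg d θ v = ∑ w ∈ Box h (n + 1), θ v w :=
  tsum_eq_sum fun _ hw => hθ.2 _ _ fun hvw => hw (hh.mem_Box_succ_of_edge hf hv hvw)

open Classical in
/-- The edges leaving `Box h n`, all of which end in `Box h (n + 1)`. -/
noncomputable def Cut (f : Fin d → ℕ → ℝ≥0∞) (h : Fin d → ℕ → ℕ) (n : ℕ) :
    Finset (Pt d × Pt d) :=
  (Box h n ×ˢ (Box h (n + 1) \ Box h n)).filter fun p => Edge d f p.1 p.2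

theorem IsFlow.sum_Cut (hf : ∀ i, Monotone (f i)) (hh : IsHeight f h)
    {θ : Pt d → Pt d → ℝ} (hθ : IsFlow d f θ) (n : ℕ) :
    ∑ p ∈ Cut f h n, θ p.1 p.2 = ∑ v ∈ Box h n, divg d θ v := by
  classical
  rw [Cut, Finset.sum_filter_of_ne fun p _ hp => by_contra fun hvw => hp (hθ.2 _ _ hvw),
    Finset.sum_product, Finset.sum_congr rfl fun v hv => hθ.divg_eq_sum_Box_succ hf hh hv,
    sum_sum_eq_sum_sum_sdiff_of_antisymm hθ.1 (hh.monotone_Box n.le_succ)]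

theorem IsUnitFlow.sum_divg_Box {r : ℕ} {θ : Pt d → Pt d → ℝ}
    (hθ : IsUnitFlow d f 0 {z | z ∈ V d f ∧ ufun d h z = r} θ) {n : ℕ} (hn : n < r) :
    ∑ v ∈ Box h n, divg d θ v = 1 := by
  rw [Finset.sum_eq_single_of_mem 0 (zero_mem_Box n) fun v hv hv0 => hθ.2.2 v ?_, hθ.2.1]
  rintro (⟨-, hvr⟩ | rfl)
  · exact (ufun_le_of_mem_Box hv).not_gt (hvr ▸ hn)
  · exact hv0 rfl

open Function in
theorem IsHeight.pairwise_disjoint_Cut (hh : IsHeight f h) :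
    Pairwise (Disjoint on (Cut f h)) := by
  intro m n hmn
  wlog hlt : m < n generalizing m n
  · exact (this hmn.symm (hmn.lt_or_gt.resolve_left hlt)).symm
  refine Finset.disjoint_left.2 fun p hm hn => ?_
  simp only [Cut, Finset.mem_filter, Finset.mem_product, Finset.mem_sdiff] at hm hn
  exact hn.1.2.2 (hh.monotone_Box hlt hm.1.2.1)

/-- Parametrises the edges leaving `Box h n`. For the sideways edge in direction `i`, the
coordinate `a i` is the height of the edge shifted by `hᵢ(n) - n`, which ranges over
`[0, hᵢ(n)]` by `IsHeight.sub_le`. -/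
def cutEdge (h : Fin d → ℕ → ℕ) (n : ℕ) : Option (Fin d) × (Fin d → ℤ) → Pt d × Pt d
  | (none, a) => ((a, n), (a, n + 1))
  | (some i, a) =>
      ((Function.update a i (h i n), a i + n - h i n),
        (Function.update a i (h i n + 1), a i + n - h i n))

theorem IsHeight.Cut_subset_image_cutEdge (hf : ∀ i, Monotone (f i)) (hh : IsHeight f h)
    (n : ℕ) : Cut f h n ⊆ (Finset.univ ×ˢ Fintype.piFinset fun i => Finset.Icc 0 (h i n : ℤ)).image
      (cutEdge h n) := by
  rintro ⟨v, w⟩ hp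
  simp only [Cut, Finset.mem_filter, Finset.mem_product, Finset.mem_sdiff] at hp
  obtain ⟨⟨hv, -, hw⟩, hvw⟩ := hp
  obtain ⟨hv1, hv2, hv3⟩ := mem_Box.1 hv
  simp only [Finset.mem_image, Finset.mem_product, Finset.mem_univ, true_and,
    Fintype.mem_piFinset, Finset.mem_Icc, Prod.exists]
  rcases edge_of_mem_Box_of_not_mem_Box hv hw hvw with ⟨hvn, rfl⟩ | ⟨i, hvi, hfi, rfl⟩
  · exact ⟨none, v.1, hv1, by simp [cutEdge, ← hvn]⟩
  have hni : n - v.2.toNat ≤ h i n := hh.sub_le hf hfi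
  refine ⟨some i, Function.update v.1 i (v.2 + h i n - n), fun j => ?_, ?_⟩
  · rcases eq_or_ne j i with rfl | hj
    · simp only [Function.update_self]; omega
    · simpa [Function.update_of_ne hj] using hv1 j
  · simp only [cutEdge, Function.update_idem, Function.update_self, ← hvi,
      Function.update_eq_self]
    exact Prod.ext (Prod.ext rfl (by ring)) (Prod.ext rfl (by ring))

theorem IsHeight.card_Cut_le (hf : ∀ i, Monotone (f i)) (hh : IsHeight f h) (n : ℕ) :
    (Cut f h n).card ≤ (d + 1) * ∏ i, (h i n + 1) := by
  refine (Finset.card_le_card (hh.Cut_subset_image_cutEdge hf n)).trans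
    (Finset.card_image_le.trans_eq ?_)
  simp [Finset.card_product, Fintype.card_piFinset]

end Wedge

theorem one_div_mul_prod_le (d : ℕ) (a : Fin d → ℕ) :
    1 / (2 * ((d : ℝ) + 1) ^ 2) * ∏ i, 1 / ((a i : ℝ) + 1)
      ≤ 2⁻¹ * (1 / (((d + 1) * ∏ i, (a i + 1) : ℕ) : ℝ)) := by
  have hd : (d : ℝ) + 1 ≤ ((d : ℝ) + 1) ^ 2 := by nlinarith
  rw [Finset.prod_div_distrib, Finset.prod_const_one]
  push_cast
  rw [div_mul_div_comm, inv_eq_one_div, div_mul_div_comm, ← mul_assoc]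
  gcongr

theorem stmt_8_general
    (d : ℕ) (f : Fin d → ℕ → ℝ≥0∞) (hf : ∀ i, Monotone (f i))
    (h : Fin d → ℕ → ℕ)
    (hrec : ∀ (i : Fin d) (n : ℕ),
      ((h i n : ℝ≥0∞) + 1 ≤ f i (n + 1) ∧ h i (n + 1) = h i n + 1) ∨
      (¬ ((h i n : ℝ≥0∞) + 1 ≤ f i (n + 1)) ∧ h i (n + 1) = h i n)) :
    ∀ r : ℕ, 1 ≤ r → ∀ θ : Pt d → Pt d → ℝ,
      IsUnitFlow d f (0 : Pt d) {z | z ∈ V d f ∧ ufun d h z = r} θ →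
      ENNReal.ofReal ((1 / (2 * ((d : ℝ) + 1) ^ 2)) *
          ∑ n ∈ Finset.range r, ∏ i : Fin d, (1 / ((h i n : ℝ) + 1)))
        ≤ energy d θ := by
  intro r _ θ hθ
  have hh : IsHeight f h := hrec
  have hcuts := ofReal_sum_one_div_le_tsum_sq (fun p : Pt d × Pt d => θ p.1 p.2)
    (Finset.range r) (Cut f h) (fun n => (d + 1) * ∏ i, (h i n + 1))
    (hh.pairwise_disjoint_Cut.set_pairwise _)
    (fun n hn => (hθ.1.sum_Cut hf hh n).trans (hθ.sum_divg_Box (Finset.mem_range.1 hn)))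
    (fun n _ => hh.card_Cut_le hf n)
  calc _ ≤ ENNReal.ofReal (2⁻¹ * ∑ n ∈ Finset.range r,
          1 / (((d + 1) * ∏ i, (h i n + 1) : ℕ) : ℝ)) := by
        rw [Finset.mul_sum, Finset.mul_sum]
        exact ENNReal.ofReal_le_ofReal
          (Finset.sum_le_sum fun n _ => one_div_mul_prod_le d fun i => h i n)
    _ ≤ energy d θ := by
        rw [ENNReal.ofReal_mul (by norm_num), ENNReal.ofReal_inv_of_pos two_pos,
          ENNReal.ofReal_ofNat, energy, one_div]
        gcongr

/-- Lemma 3.1, flow/Thomson form: every unit flow θ from O to ∂_r has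
energy E(θ) ≥ (1/(2(d+1)²)) ∑_{n<r} ∏ᵢ 1/(hᵢ(n)+1). -/
theorem stmt_8
    (d : ℕ) (hd : 1 ≤ d) (f : Fin d → ℕ → ℝ≥0∞) (hf : ∀ i, Monotone (f i))
    (h : Fin d → ℕ → ℕ) (h0 : ∀ i, h i 0 = 0)
    (hrec : ∀ (i : Fin d) (n : ℕ),
      ((h i n : ℝ≥0∞) + 1 ≤ f i (n + 1) ∧ h i (n + 1) = h i n + 1) ∨
      (¬ ((h i n : ℝ≥0∞) + 1 ≤ f i (n + 1)) ∧ h i (n + 1) = h i n)) :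
    ∀ r : ℕ, 1 ≤ r → ∀ θ : Pt d → Pt d → ℝ,
      IsUnitFlow d f (0 : Pt d) {z | z ∈ V d f ∧ ufun d h z = r} θ →
      ENNReal.ofReal ((1 / (2 * ((d : ℝ) + 1) ^ 2)) *
          ∑ n ∈ Finset.range r, ∏ i : Fin d, (1 / ((h i n : ℝ) + 1)))
        ≤ energy d θ :=
  stmt_8_general d f hf h hrec

end WedgePaper
end

section
/- The functions g_{±i} satisfy: (a) g_i(n+1) − g_i(n) ∈ {0, 1} and g_{−i}(n+1) − g_{−i}(n) ∈ {0, −1} for each n ≥ 0 and 1 ≤ i ≤ d; (b) g_i(n) − g_{−i}(n) = h_i(n) for each n ≥ 0 and 1 ≤ i ≤ d; (c) 0 ≤ g_{−i}(n) ≤ g_i(n) ≤ min{f_i(n+s), h_i(r)} for each 0 ≤ n ≤ r − s and 1 ≤ i ≤ d. Consequently x ∈ V_x and V_x ⊆ {y ∈ V : u(y) ≤ r}. -/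
open scoped ENNReal BigOperators

namespace WedgePaper

/-- properties (a), (b), (c) of the functions g_{±i}; consequently
x ∈ V_x and V_x ⊆ {y ∈ V : u(y) ≤ r}. -/
theorem stmt_11
    (d : ℕ) (hd : 1 ≤ d) (f : Fin d → ℕ → ℝ≥0∞) (hf : ∀ i, Monotone (f i))
    (h : Fin d → ℕ → ℕ) (h0 : ∀ i, h i 0 = 0)
    (hrec : ∀ (i : Fin d) (n : ℕ),
      ((h i n : ℝ≥0∞) + 1 ≤ f i (n + 1) ∧ h i (n + 1) = h i n + 1) ∨
      (¬ ((h i n : ℝ≥0∞) + 1 ≤ f i (n + 1)) ∧ h i (n + 1) = h i n))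
    (r s : ℕ) (hr : 1 ≤ r) (x1 : Fin d → ℤ)
    (hx : (x1, (s : ℤ)) ∈ V d f) (hux : ufun d h (x1, (s : ℤ)) ≤ r - 1)
    (gp gm : Fin d → ℕ → ℤ)
    (hg0 : ∀ i : Fin d, gp i 0 = x1 i ∧ gm i 0 = x1 i)
    (hgrec : ∀ (i : Fin d) (n : ℕ),
      (h i (n + 1) = h i n → gp i (n + 1) = gp i n ∧ gm i (n + 1) = gm i n) ∧
      (h i (n + 1) = h i n + 1 → gm i n = 0 →
        gm i (n + 1) = 0 ∧ gp i (n + 1) = gp i n + 1) ∧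
      (h i (n + 1) = h i n + 1 → 0 < gm i n →
        gm i (n + 1) = gm i n - 1 ∧ gp i (n + 1) = gp i n)) :
    (∀ (i : Fin d) (n : ℕ),
      (gp i (n + 1) = gp i n ∨ gp i (n + 1) = gp i n + 1) ∧
      (gm i (n + 1) = gm i n ∨ gm i (n + 1) = gm i n - 1)) ∧
    (∀ (i : Fin d) (n : ℕ), gp i n - gm i n = (h i n : ℤ)) ∧
    (∀ (i : Fin d) (n : ℕ), n ≤ r - s →
      0 ≤ gm i n ∧ gm i n ≤ gp i n ∧
      ((gp i n).toNat : ℝ≥0∞) ≤ f i (n + s) ∧ gp i n ≤ (h i r : ℤ)) ∧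
    (x1, (s : ℤ)) ∈ Vx d gp gm r s ∧
    Vx d gp gm r s ⊆ {y | y ∈ V d f ∧ ufun d h y ≤ r} := by
  -- basic facts
  have hmono : ∀ i, Monotone (h i) := by
    intro i
    apply monotone_nat_of_le_succ
    intro n
    rcases hrec i n with ⟨_, e⟩ | ⟨_, e⟩ <;> omega
  have hx1nn : ∀ i, 0 ≤ x1 i := fun i => (hx.2 i).1
  have hx1f : ∀ i, ((x1 i).toNat : ℝ≥0∞) ≤ f i s := by
    intro i
    have := (hx.2 i).2
    simpa using this
  rw [ufun, max_le_iff] at hux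
  obtain ⟨hs', hp'⟩ := hux
  have hsr : s ≤ r - 1 := by simpa using hs'
  have hpix : ∀ i, pfun d h (x1, (s : ℤ)) i ≤ r - 1 :=
    fun i => Finset.sup_le_iff.mp hp' i (Finset.mem_univ i)
  -- the set defining pfun is nonempty
  have hSne : ∀ i, ∃ m, x1 i ≤ (h i m : ℤ) := by
    intro i
    have key : ∀ k, min ((x1 i).toNat) (h i s + k) ≤ h i (s + k) := by
      intro k
      induction k with
      | zero => simp
      | succ k ih =>
        by_cases hc : (x1 i).toNat ≤ h i (s + k)
        · exact le_trans (min_le_left _ _) (le_trans hc (hmono i (by omega)))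
        · push_neg at hc
          have h1 : (h i (s + k) : ℝ≥0∞) + 1 ≤ f i (s + k + 1) := by
            calc (h i (s + k) : ℝ≥0∞) + 1 = ((h i (s + k) + 1 : ℕ) : ℝ≥0∞) := by push_cast; ring
              _ ≤ ((x1 i).toNat : ℝ≥0∞) := by exact_mod_cast Nat.cast_le.mpr hc
              _ ≤ f i s := hx1f i
              _ ≤ f i (s + k + 1) := hf i (by omega)
          rcases hrec i (s + k) with ⟨_, he⟩ | ⟨hne, _⟩
          · have : s + (k + 1) = (s + k) + 1 := by omega
            rw [this, he]; omega
          · exact absurd h1 hne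
    refine ⟨s + (x1 i).toNat, ?_⟩
    have h2 := key ((x1 i).toNat)
    have h3 : min ((x1 i).toNat) (h i s + (x1 i).toNat) = (x1 i).toNat := by omega
    rw [h3] at h2
    have := hx1nn i
    omega
  have hx1h : ∀ i, x1 i ≤ (h i (r - 1) : ℤ) := by
    intro i
    have hmem : pfun d h (x1, (s : ℤ)) i ∈ {m | x1 i ≤ (h i m : ℤ)} := by
      apply Nat.sInf_mem
      obtain ⟨m, hm⟩ := hSne i
      exact ⟨m, hm⟩
    have h1 : x1 i ≤ (h i (pfun d h (x1, (s : ℤ)) i) : ℤ) := hmem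
    exact le_trans h1 (by exact_mod_cast hmono i (hpix i))
  -- main inductive invariants
  have main : ∀ (i : Fin d) (n : ℕ),
      gp i n - gm i n = (h i n : ℤ) ∧ 0 ≤ gm i n ∧
      gp i n ≤ max (x1 i) ((h i n : ℤ)) ∧ ((gp i n).toNat : ℝ≥0∞) ≤ f i (n + s) := by
    intro i n
    induction n with
    | zero =>
      refine ⟨by rw [(hg0 i).1, (hg0 i).2, h0]; simp, by rw [(hg0 i).2]; exact hx1nn i,
        by rw [(hg0 i).1]; exact le_max_left _ _, ?_⟩
      rw [(hg0 i).1]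
      simpa using hx1f i
    | succ n ih =>
      obtain ⟨ib, im, ix, iF⟩ := ih
      obtain ⟨r1, r2, r3⟩ := hgrec i n
      rcases hrec i n with ⟨hfc, he⟩ | ⟨hfc, he⟩
      · by_cases hm : gm i n = 0
        · obtain ⟨e1, e2⟩ := r2 he hm
          have hgph : gp i (n + 1) = (h i n : ℤ) + 1 := by omega
          refine ⟨by rw [he]; push_cast; omega, by omega, ?_, ?_⟩
          · rw [hgph, he]
            push_cast
            exact le_max_of_le_right (by omega)
          · rw [hgph]
            have heq : (((h i n : ℤ) + 1).toNat : ℝ≥0∞) = (h i n : ℝ≥0∞) + 1 := by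
              have : ((h i n : ℤ) + 1).toNat = h i n + 1 := by omega
              rw [this]; push_cast; ring
            rw [heq]
            exact le_trans hfc (hf i (by omega))
        · obtain ⟨e1, e2⟩ := r3 he (by omega)
          refine ⟨by rw [he]; push_cast; omega, by omega, ?_, ?_⟩
          · rw [e2]
            exact le_trans ix (max_le_max le_rfl (by exact_mod_cast hmono i (by omega)))
          · rw [e2]
            exact le_trans iF (hf i (by omega))
      · obtain ⟨e1, e2⟩ := r1 he
        refine ⟨by rw [e1, e2, he]; exact ib, by omega, ?_, ?_⟩
        · rw [e1, he]; exact ix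
        · rw [e1]; exact le_trans iF (hf i (by omega))
  -- part (c)
  have hc : ∀ (i : Fin d) (n : ℕ), n ≤ r - s →
      0 ≤ gm i n ∧ gm i n ≤ gp i n ∧
      ((gp i n).toNat : ℝ≥0∞) ≤ f i (n + s) ∧ gp i n ≤ (h i r : ℤ) := by
    intro i n hn
    obtain ⟨ib, im, ix, iF⟩ := main i n
    refine ⟨im, by omega, iF, ?_⟩
    have h1 : x1 i ≤ (h i r : ℤ) :=
      le_trans (hx1h i) (by exact_mod_cast hmono i (by omega))
    have h2 : (h i n : ℤ) ≤ (h i r : ℤ) := by exact_mod_cast hmono i (by omega)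
    exact le_trans ix (max_le h1 h2)
  refine ⟨?_, fun i n => (main i n).1, hc, ?_, ?_⟩
  · -- part (a)
    intro i n
    obtain ⟨r1, r2, r3⟩ := hgrec i n
    have hm0 := (main i n).2.1
    rcases hrec i n with ⟨_, he⟩ | ⟨_, he⟩
    · rcases eq_or_lt_of_le hm0 with hm | hm
      · obtain ⟨e1, e2⟩ := r2 he hm.symm
        exact ⟨Or.inr e2, Or.inl (by omega)⟩
      · obtain ⟨e1, e2⟩ := r3 he hm
        exact ⟨Or.inl e2, Or.inr e1⟩
    · obtain ⟨e1, e2⟩ := r1 he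
      exact ⟨Or.inl e1, Or.inl e2⟩
  · -- x ∈ Vx
    exact ⟨0, Nat.zero_le _, by simp, fun i => ⟨le_of_eq (hg0 i).2, ge_of_eq (hg0 i).1⟩⟩
  · -- Vx ⊆ ...
    rintro y ⟨n, hn, hy2, hyi⟩
    have hc1 := fun i => (hc i n hn).1
    have hc3 := fun i => (hc i n hn).2.2.1
    have hc4 := fun i => (hc i n hn).2.2.2
    have hy2t : y.2.toNat = n + s := by rw [hy2]; omega
    have hyV : y ∈ V d f := by
      refine ⟨by rw [hy2]; positivity, fun i => ⟨le_trans (hc1 i) (hyi i).1, ?_⟩⟩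
      rw [hy2t]
      calc ((y.1 i).toNat : ℝ≥0∞) ≤ ((gp i n).toNat : ℝ≥0∞) := by
            exact_mod_cast Nat.cast_le.mpr (Int.toNat_le_toNat (hyi i).2)
        _ ≤ f i (n + s) := hc3 i
    refine ⟨hyV, ?_⟩
    rw [ufun, max_le_iff]
    constructor
    · omega
    · apply Finset.sup_le
      intro i _
      apply Nat.sInf_le
      exact le_trans (hyi i).2 (hc4 i)


end WedgePaper
end

section
/- For each n ≥ 1 and each 1 ≤ i ≤ d, at least one of g_{−i}(n) = g_{−i}(n−1) and g_i(n) = g_i(n−1) holds, so L_i(n) is well defined. Moreover, the map Γ defined by Γ(x) = O and Γ(u_1,…,u_d,n+s) = (|u_1 − L_1(n)|, …, |u_d − L_d(n)|, n) for (u_1,…,u_d,n+s) ∈ V_x with n ≥ 1, is a bijection from V_x onto H such that: (i) for u, v ∈ V_x with u_{d+1} = v_{d+1}, one has ‖u − v‖₁ = 1 if and only if ‖Γ(u) − Γ(v)‖₁ = 1; and (ii) for u ∈ V_x, one has u − e_{d+1} ∈ V_x if and only if Γ(u) − e_{d+1} ∈ H, where e_{d+1} is the (d+1)-st standard unit vector.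 -/
open scoped ENNReal BigOperators

namespace WedgePaper

section Aux

variable {d : ℕ} {h : Fin d → ℕ → ℕ} {gp gm : Fin d → ℕ → ℤ}

/-- The recursion hypothesis on `gp, gm`. -/
def GRec (d : ℕ) (h : Fin d → ℕ → ℕ) (gp gm : Fin d → ℕ → ℤ) : Prop :=
  ∀ (i : Fin d) (n : ℕ),
      (h i (n + 1) = h i n → gp i (n + 1) = gp i n ∧ gm i (n + 1) = gm i n) ∧
      (h i (n + 1) = h i n + 1 → gm i n = 0 →
        gm i (n + 1) = 0 ∧ gp i (n + 1) = gp i n + 1) ∧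
      (h i (n + 1) = h i n + 1 → 0 < gm i n →
        gm i (n + 1) = gm i n - 1 ∧ gp i (n + 1) = gp i n)

/-- The step hypothesis on `h`. -/
def HStep (d : ℕ) (h : Fin d → ℕ → ℕ) : Prop :=
  ∀ (i : Fin d) (n : ℕ), h i (n+1) = h i n ∨ h i (n+1) = h i n + 1

/-- Base hypothesis. -/
def GBase (d : ℕ) (h : Fin d → ℕ → ℕ) (gp gm : Fin d → ℕ → ℤ) : Prop :=
  ∀ i : Fin d, 0 ≤ gm i 0 ∧ gp i 0 = gm i 0 ∧ h i 0 = 0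

lemma inv_aux (hs : HStep d h) (hb : GBase d h gp gm) (hg : GRec d h gp gm)
    (i : Fin d) : ∀ n, 0 ≤ gm i n ∧ gp i n - gm i n = (h i n : ℤ) := by
  intro n
  induction n with
  | zero =>
    obtain ⟨a, b, c⟩ := hb i
    refine ⟨a, ?_⟩
    rw [b, c]
    simp
  | succ n ih =>
    obtain ⟨h1, h2⟩ := ih
    rcases hs i n with hst | hst
    · obtain ⟨e1, e2⟩ := (hg i n).1 hst
      rw [hst] at *
      omega
    · rcases h1.lt_or_eq with hlt | heq
      · obtain ⟨e1, e2⟩ := (hg i n).2.2 hst hlt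
        rw [hst] at *
        push_cast at *
        omega
      · obtain ⟨e1, e2⟩ := (hg i n).2.1 hst heq.symm
        rw [hst] at *
        push_cast at *
        omega

lemma stepCase (hs : HStep d h) (hb : GBase d h gp gm) (hg : GRec d h gp gm)
    (i : Fin d) (n : ℕ) :
    (gm i (n+1) = gm i n ∧ gp i (n+1) = gp i n ∧ h i (n+1) = h i n) ∨
    (gm i n = 0 ∧ gm i (n+1) = 0 ∧ gp i (n+1) = gp i n + 1 ∧ h i (n+1) = h i n + 1) ∨
    (0 < gm i n ∧ gm i (n+1) = gm i n - 1 ∧ gp i (n+1) = gp i n ∧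
      h i (n+1) = h i n + 1) := by
  have hmn : 0 ≤ gm i n := (inv_aux hs hb hg i n).1
  rcases hs i n with hst | hst
  · exact Or.inl ⟨((hg i n).1 hst).2, ((hg i n).1 hst).1, hst⟩
  · rcases hmn.lt_or_eq with hlt | heq
    · exact Or.inr (Or.inr ⟨hlt, ((hg i n).2.2 hst hlt).1, ((hg i n).2.2 hst hlt).2, hst⟩)
    · exact Or.inr (Or.inl ⟨heq.symm, ((hg i n).2.1 hst heq.symm).1,
        ((hg i n).2.1 hst heq.symm).2, hst⟩)

lemma Lfun_endpoint (i : Fin d) (n : ℕ) :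
    Lfun d gp gm i (n+1) = gm i (n+1) ∨ Lfun d gp gm i (n+1) = gp i (n+1) := by
  simp only [Lfun, Nat.add_sub_cancel]
  split
  · exact Or.inl rfl
  · exact Or.inr rfl

lemma mapsBound (hs : HStep d h) (hb : GBase d h gp gm) (hg : GRec d h gp gm)
    (i : Fin d) (n : ℕ) (u : ℤ) (h1 : gm i (n+1) ≤ u) (h2 : u ≤ gp i (n+1)) :
    |u - Lfun d gp gm i (n+1)| ≤ (h i (n+1) : ℤ) := by
  have hinv := inv_aux hs hb hg i (n+1)
  rcases Lfun_endpoint (gp := gp) (gm := gm) i n with hL | hL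
  · rw [hL, abs_of_nonneg (by omega)]; omega
  · rw [hL, abs_of_nonpos (by omega)]; omega

lemma injCoord (hs : HStep d h) (hb : GBase d h gp gm) (hg : GRec d h gp gm)
    (i : Fin d) (n : ℕ) (u v : ℤ)
    (hu1 : gm i (n+1) ≤ u) (hu2 : u ≤ gp i (n+1))
    (hv1 : gm i (n+1) ≤ v) (hv2 : v ≤ gp i (n+1))
    (he : |u - Lfun d gp gm i (n+1)| = |v - Lfun d gp gm i (n+1)|) : u = v := by
  rcases Lfun_endpoint (gp := gp) (gm := gm) i n with hL | hL
  · rw [hL, abs_of_nonneg (by omega), abs_of_nonneg (by omega)] at he; omega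
  · rw [hL, abs_of_nonpos (by omega), abs_of_nonpos (by omega)] at he; omega

lemma distCoord (hs : HStep d h) (hb : GBase d h gp gm) (hg : GRec d h gp gm)
    (i : Fin d) (n : ℕ) (u v : ℤ)
    (hu1 : gm i (n+1) ≤ u) (hu2 : u ≤ gp i (n+1))
    (hv1 : gm i (n+1) ≤ v) (hv2 : v ≤ gp i (n+1)) :
    |(|u - Lfun d gp gm i (n+1)| - |v - Lfun d gp gm i (n+1)|)| = |u - v| := by
  rcases Lfun_endpoint (gp := gp) (gm := gm) i n with hL | hL
  · rw [hL, abs_of_nonneg (show (0:ℤ) ≤ u - gm i (n+1) by omega),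
      abs_of_nonneg (show (0:ℤ) ≤ v - gm i (n+1) by omega)]
    congr 1; ring
  · rw [hL, abs_of_nonpos (show u - gp i (n+1) ≤ (0:ℤ) by omega),
      abs_of_nonpos (show v - gp i (n+1) ≤ (0:ℤ) by omega)]
    rw [show -(u - gp i (n+1)) - -(v - gp i (n+1)) = v - u by ring, abs_sub_comm]

lemma surjCoord (hs : HStep d h) (hb : GBase d h gp gm) (hg : GRec d h gp gm)
    (i : Fin d) (n : ℕ) (w : ℤ) (hw0 : 0 ≤ w) (hw1 : w ≤ (h i (n+1) : ℤ)) :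
    ∃ u, gm i (n+1) ≤ u ∧ u ≤ gp i (n+1) ∧ |u - Lfun d gp gm i (n+1)| = w := by
  have hinv := inv_aux hs hb hg i (n+1)
  rcases Lfun_endpoint (gp := gp) (gm := gm) i n with hL | hL
  · refine ⟨gm i (n+1) + w, by omega, by omega, ?_⟩
    rw [hL, abs_of_nonneg (by omega)]; omega
  · refine ⟨gp i (n+1) - w, by omega, by omega, ?_⟩
    rw [hL, abs_of_nonpos (by omega)]; omega

lemma downCoord (hs : HStep d h) (hb : GBase d h gp gm) (hg : GRec d h gp gm)
    (i : Fin d) (n : ℕ) (u : ℤ) (h1 : gm i (n+1) ≤ u) (h2 : u ≤ gp i (n+1)) :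
    (gm i n ≤ u ∧ u ≤ gp i n) ↔ |u - Lfun d gp gm i (n+1)| ≤ (h i n : ℤ) := by
  have hinv := inv_aux hs hb hg i (n+1)
  have hinvn := inv_aux hs hb hg i n
  rcases stepCase hs hb hg i n with ⟨e1, e2, e3⟩ | ⟨e0, e1, e2, e3⟩ | ⟨e0, e1, e2, e3⟩
  · have hL : Lfun d gp gm i (n+1) = gm i (n+1) := by
      simp only [Lfun, Nat.add_sub_cancel, if_pos e1]
    rw [hL, abs_of_nonneg (by omega)]
    omega
  · have hL : Lfun d gp gm i (n+1) = gm i (n+1) := by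
      simp only [Lfun, Nat.add_sub_cancel, if_pos (by omega : gm i (n+1) = gm i n)]
    rw [hL, abs_of_nonneg (by omega)]
    rw [e3] at hinv
    push_cast at hinv
    omega
  · have hL : Lfun d gp gm i (n+1) = gp i (n+1) := by
      simp only [Lfun, Nat.add_sub_cancel, if_neg (by omega : ¬ gm i (n+1) = gm i n)]
    rw [hL, abs_of_nonpos (by omega)]
    rw [e3] at hinv
    push_cast at hinv
    omega

end Aux

/-- for each n ≥ 1 and i, at least one of g_{-i}(n) = g_{-i}(n-1) and
gᵢ(n) = gᵢ(n-1) holds (so Lᵢ(n) is well defined); moreover Γ is a bijection from V_x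
onto H preserving same-level adjacency and the downward relation. -/
theorem stmt_12
    (d : ℕ) (hd : 1 ≤ d) (f : Fin d → ℕ → ℝ≥0∞) (hf : ∀ i, Monotone (f i))
    (h : Fin d → ℕ → ℕ) (h0 : ∀ i, h i 0 = 0)
    (hrec : ∀ (i : Fin d) (n : ℕ),
      ((h i n : ℝ≥0∞) + 1 ≤ f i (n + 1) ∧ h i (n + 1) = h i n + 1) ∨
      (¬ ((h i n : ℝ≥0∞) + 1 ≤ f i (n + 1)) ∧ h i (n + 1) = h i n))
    (r s : ℕ) (hr : 1 ≤ r) (x1 : Fin d → ℤ)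
    (hx : (x1, (s : ℤ)) ∈ V d f) (hux : ufun d h (x1, (s : ℤ)) ≤ r - 1)
    (gp gm : Fin d → ℕ → ℤ)
    (hg0 : ∀ i : Fin d, gp i 0 = x1 i ∧ gm i 0 = x1 i)
    (hgrec : ∀ (i : Fin d) (n : ℕ),
      (h i (n + 1) = h i n → gp i (n + 1) = gp i n ∧ gm i (n + 1) = gm i n) ∧
      (h i (n + 1) = h i n + 1 → gm i n = 0 →
        gm i (n + 1) = 0 ∧ gp i (n + 1) = gp i n + 1) ∧
      (h i (n + 1) = h i n + 1 → 0 < gm i n →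
        gm i (n + 1) = gm i n - 1 ∧ gp i (n + 1) = gp i n)) :
    (∀ (i : Fin d) (n : ℕ), 1 ≤ n → gm i n = gm i (n - 1) ∨ gp i n = gp i (n - 1)) ∧
    Set.BijOn (Gam d gp gm s) (Vx d gp gm r s) (Hset d h r s) ∧
    (∀ y ∈ Vx d gp gm r s, ∀ z ∈ Vx d gp gm r s, y.2 = z.2 →
      (dist1 d y z = 1 ↔ dist1 d (Gam d gp gm s y) (Gam d gp gm s z) = 1)) ∧
    (∀ y ∈ Vx d gp gm r s,
      ((y.1, y.2 - 1) ∈ Vx d gp gm r s ↔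
        ((Gam d gp gm s y).1, (Gam d gp gm s y).2 - 1) ∈ Hset d h r s)) := by
  have hs : HStep d h := by
    intro i n
    rcases hrec i n with ⟨_, e⟩ | ⟨_, e⟩
    · exact Or.inr e
    · exact Or.inl e
  have hb : GBase d h gp gm := by
    intro i
    obtain ⟨a, b⟩ := hg0 i
    exact ⟨b ▸ (hx.2 i).1, by rw [a, b], h0 i⟩
  have hg : GRec d h gp gm := hgrec
  have inv := inv_aux hs hb hg
  -- Gam evaluation lemmas
  have gam0 : ∀ y : Pt d, y.2 = (s:ℤ) → Gam d gp gm s y = 0 := by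
    intro y hy
    simp [Gam, hy]
  have gamS : ∀ (y : Pt d) (n : ℕ), y.2 = (n:ℤ) + s → 1 ≤ n →
      Gam d gp gm s y = (fun i => |y.1 i - Lfun d gp gm i n|, (n:ℤ)) := by
    intro y n hy hn
    have hys : y.2 - (s:ℤ) = (n:ℤ) := by omega
    rw [Gam, if_neg (by omega), hys]
    simp
  have part1 : ∀ (i : Fin d) (n : ℕ), 1 ≤ n →
      gm i n = gm i (n - 1) ∨ gp i n = gp i (n - 1) := by
    intro i n hn
    obtain ⟨m, rfl⟩ : ∃ m, n = m + 1 := ⟨n - 1, by omega⟩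
    simp only [Nat.add_sub_cancel]
    rcases stepCase hs hb hg i m with c | c | c
    · exact Or.inl c.1
    · exact Or.inl (by omega)
    · exact Or.inr c.2.2.1
  refine ⟨part1, ⟨?_, ?_, ?_⟩, ?_, ?_⟩
  · -- MapsTo
    rintro y ⟨n, hn, hy2, hyb⟩
    rcases n with _ | m
    · rw [gam0 y (by simpa using hy2)]
      exact ⟨0, by omega, by simp, fun i => by simp [h0 i]⟩
    · rw [gamS y (m+1) hy2 (by omega)]
      exact ⟨m+1, hn, rfl, fun i =>
        ⟨abs_nonneg _, mapsBound hs hb hg i m _ (hyb i).1 (hyb i).2⟩⟩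
  · -- InjOn
    rintro y ⟨n, hn, hy2, hyb⟩ z ⟨m, hm, hz2, hzb⟩ he
    rcases n with _ | a <;> rcases m with _ | b
    · refine Prod.ext ?_ (by rw [hy2, hz2])
      funext i
      have h1 := hyb i; have h2 := hzb i; have h3 := hg0 i
      omega
    · exfalso
      rw [gam0 y (by simpa using hy2), gamS z (b+1) hz2 (by omega)] at he
      have := congrArg Prod.snd he
      simp at this
      omega
    · exfalso
      rw [gam0 z (by simpa using hz2), gamS y (a+1) hy2 (by omega)] at he
      have := congrArg Prod.snd he
      simp at this
      omega
    · rw [gamS y (a+1) hy2 (by omega), gamS z (b+1) hz2 (by omega)] at he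
      have h2 := congrArg Prod.snd he
      simp only at h2
      have hab : a = b := by omega
      subst hab
      have h1 := congrArg Prod.fst he
      simp only at h1
      refine Prod.ext ?_ (by omega)
      funext i
      exact injCoord hs hb hg i a _ _ (hyb i).1 (hyb i).2 (hzb i).1 (hzb i).2
        (congrFun h1 i)
  · -- SurjOn
    rintro w ⟨n, hn, hw2, hwb⟩
    rcases n with _ | m
    · refine ⟨(x1, (s:ℤ)), ⟨0, by omega, by simp, fun i => by
        have := hg0 i
        show gm i 0 ≤ x1 i ∧ x1 i ≤ gp i 0
        omega⟩, ?_⟩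
      rw [gam0 _ rfl]
      refine (Prod.ext ?_ ?_).symm
      · funext i
        have h1 := hwb i
        have h2 : h i 0 = 0 := h0 i
        simp only [Prod.fst_zero, Pi.zero_apply]
        omega
      · simpa using hw2
    · choose u hu1 hu2 hu3 using fun i =>
        surjCoord hs hb hg i m (w.1 i) (hwb i).1 (hwb i).2
      refine ⟨(u, ((m+1 : ℕ) : ℤ) + (s:ℤ)), ⟨m+1, hn, rfl, fun i => ⟨hu1 i, hu2 i⟩⟩, ?_⟩
      rw [gamS _ (m+1) rfl (by omega)]
      refine Prod.ext ?_ ?_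
      · funext i
        exact hu3 i
      · simpa using hw2.symm
  · -- same-level adjacency
    rintro y ⟨n, hn, hy2, hyb⟩ z ⟨m, hm, hz2, hzb⟩ hyz
    have hnm : n = m := by omega
    subst hnm
    rcases n with _ | k
    · have h1 : y = z := by
        refine Prod.ext ?_ (by omega)
        funext i
        have := hyb i; have := hzb i; have := hg0 i
        omega
      subst h1
      simp [dist1]
    · rw [gamS y (k+1) hy2 (by omega), gamS z (k+1) hz2 (by omega)]
      have key : dist1 d
          ((fun i => |y.1 i - Lfun d gp gm i (k+1)|, ((k+1:ℕ):ℤ)))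
          ((fun i => |z.1 i - Lfun d gp gm i (k+1)|, ((k+1:ℕ):ℤ))) = dist1 d y z := by
        simp only [dist1]
        congr 1
        · exact Finset.sum_congr rfl fun i _ =>
            distCoord hs hb hg i k _ _ (hyb i).1 (hyb i).2 (hzb i).1 (hzb i).2
        · rw [hyz]
          simp
      rw [key]
  · -- downward relation
    rintro y ⟨n, hn, hy2, hyb⟩
    rcases n with _ | k
    · constructor
      · rintro ⟨m, hm, h2, h3⟩
        exfalso
        simp only at h2
        omega
      · rw [gam0 y (by simpa using hy2)]
        rintro ⟨m, hm, h2, h3⟩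
        exfalso
        simp only [Prod.snd_zero] at h2
        omega
    · rw [gamS y (k+1) hy2 (by omega)]
      constructor
      · rintro ⟨m, hm, h2, h3⟩
        simp only at h2
        have hmk : k = m := by omega
        subst hmk
        refine ⟨k, by omega, by push_cast; ring, fun i => ⟨abs_nonneg _, ?_⟩⟩
        exact (downCoord hs hb hg i k _ (hyb i).1 (hyb i).2).mp (h3 i)
      · rintro ⟨m, hm, h2, h3⟩
        simp only at h2
        have hmk : k = m := by omega
        subst hmk
        refine ⟨k, by omega, by simp only; omega, fun i => ?_⟩
        exact (downCoord hs hb hg i k _ (hyb i).1 (hyb i).2).mpr (h3 i).2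

end WedgePaper
end
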